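/- arXiv:2307.07672 — 4 statements merged into one kernel-verified Lean document; each statement's English description precedes it below -/
import Mathlib

section
/- Let Ω be a nonempty finite set and p a full-support probability vector on Ω. A collection (λ^ω)_{ω∈Ω} of Borel probability measures on Δ(Ω) is a feasible collection of conditional belief distributions for prior p in the single-receiver problem (n = 1) if and only if, setting λ̄ = ∑_{ω'∈Ω} p(ω')·λ^{ω'}, one has λ^ω(A) = ∫_A (x(ω)/p(ω)) dλ̄(x) for every ω ∈ Ω and every Borel set A ⊆ Δ(Ω). -/
open MeasureTheory
set_option linter.unusedSectionVars false

noncomputable section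

abbrev Belief (Ω : Type) [Fintype Ω] : Type := stdSimplex ℝ Ω

variable {Ω : Type} [Fintype Ω] [MeasurableSpace Ω] [MeasurableSingletonClass Ω]

/-- The joint distribution of state and beliefs. -/
def jointP (p : Ω → ℝ) {X : Type} [MeasurableSpace X] (μ : Ω → Measure X) :
    Measure (Ω × X) :=
  ∑ ω : Ω, ENNReal.ofReal (p ω) • ((Measure.dirac ω).prod (μ ω))

/-- Feasibility of a collection of conditional belief distributions, n receivers. -/
def Feasible (p : Ω → ℝ) (n : ℕ) (μ : Ω → Measure (Fin n → Belief Ω)) : Prop :=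
  (∀ ω, IsProbabilityMeasure (μ ω)) ∧
  ∀ (i : Fin n) (ω' : Ω),
    (fun z : Ω × (Fin n → Belief Ω) => (z.2 i).1 ω')
      =ᵐ[jointP p μ]
      (jointP p μ)[Set.indicator {z : Ω × (Fin n → Belief Ω) | z.1 = ω'} (fun _ => (1 : ℝ)) |
        MeasurableSpace.comap (fun z : Ω × (Fin n → Belief Ω) => z.2 i) inferInstance]

/-- Feasibility of a collection of conditional belief distributions, single receiver. -/
def Feasible1 (p : Ω → ℝ) (lam : Ω → Measure (Belief Ω)) : Prop :=
  (∀ ω, IsProbabilityMeasure (lam ω)) ∧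
  ∀ ω' : Ω,
    (fun z : Ω × Belief Ω => (z.2).1 ω')
      =ᵐ[jointP p lam]
      (jointP p lam)[Set.indicator {z : Ω × Belief Ω | z.1 = ω'} (fun _ => (1 : ℝ)) |
        MeasurableSpace.comap (fun z : Ω × Belief Ω => z.2) inferInstance]

lemma measurable_eval (ω : Ω) : Measurable (fun x : Belief Ω => x.1 ω) :=
  (measurable_pi_apply ω).comp measurable_subtype_coe

lemma eval_nonneg (ω : Ω) (x : Belief Ω) : 0 ≤ x.1 ω := x.2.1 ω

lemma eval_le_one (ω : Ω) (x : Belief Ω) : x.1 ω ≤ 1 := by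
  have h := x.2.2
  calc x.1 ω ≤ ∑ ω' : Ω, x.1 ω' :=
        Finset.single_le_sum (fun i _ => x.2.1 i) (Finset.mem_univ ω)
    _ = 1 := h

lemma restrict_finset_sum {X : Type} [MeasurableSpace X] (μ : Ω → Measure X) (s : Set X) :
    (∑ ω : Ω, μ ω).restrict s = ∑ ω : Ω, (μ ω).restrict s := by
  ext t ht
  simp [Measure.restrict_apply ht, Measure.finset_sum_apply]

lemma restrict_jointP (p : Ω → ℝ) {X : Type} [MeasurableSpace X] (μ : Ω → Measure X) [∀ ω, SFinite (μ ω)]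
    {A : Set X} (hA : MeasurableSet A) :
    (jointP p μ).restrict (Prod.snd ⁻¹' A) =
      ∑ ω : Ω, ENNReal.ofReal (p ω) • (((μ ω).restrict A).map (Prod.mk ω)) := by
  rw [jointP, restrict_finset_sum]
  congr 1
  ext ω
  rw [Measure.restrict_smul, Measure.dirac_prod,
    Measure.restrict_map measurable_prodMk_left (measurable_snd hA)]
  rfl

lemma setIntegral_jointP (p : Ω → ℝ) (hp : ∀ ω, 0 ≤ p ω)
    (lam : Ω → Measure (Belief Ω)) [∀ ω, IsFiniteMeasure (lam ω)]
    (f : Ω × Belief Ω → ℝ) (hf : Measurable f) (hb : ∀ z, |f z| ≤ 1)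
    {A : Set (Belief Ω)} (hA : MeasurableSet A) :
    ∫ z in Prod.snd ⁻¹' A, f z ∂(jointP p lam)
      = ∑ ω : Ω, p ω * ∫ x in A, f (ω, x) ∂(lam ω) := by
  have hint : ∀ ω : Ω,
      Integrable f (ENNReal.ofReal (p ω) • (((lam ω).restrict A).map (Prod.mk ω))) := by
    intro ω
    refine Integrable.smul_measure ?_ ENNReal.ofReal_ne_top
    rw [integrable_map_measure hf.aestronglyMeasurable measurable_prodMk_left.aemeasurable]
    refine Integrable.mono' (integrable_const 1)
      (hf.comp measurable_prodMk_left).aestronglyMeasurable ?_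
    exact Filter.Eventually.of_forall fun x => hb (ω, x)
  rw [restrict_jointP p lam hA, integral_finset_sum_measure fun ω _ => hint ω]
  refine Finset.sum_congr rfl fun ω _ => ?_
  rw [integral_smul_measure,
    integral_map measurable_prodMk_left.aemeasurable hf.aestronglyMeasurable,
    ENNReal.toReal_ofReal (hp ω), smul_eq_mul]

lemma jointP_isProb (p : Ω → ℝ) (hp : ∀ ω, 0 ≤ p ω) (hpsum : ∑ ω : Ω, p ω = 1)
    (lam : Ω → Measure (Belief Ω)) (hprob : ∀ ω, IsProbabilityMeasure (lam ω)) :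
    IsProbabilityMeasure (jointP p lam) := by
  constructor
  have : ∀ ω : Ω, ((Measure.dirac ω).prod (lam ω)) Set.univ = 1 := by
    intro ω
    haveI := hprob ω
    simp [Measure.prod_prod]
  simp only [jointP, Measure.finset_sum_apply, Measure.smul_apply, smul_eq_mul]
  rw [Finset.sum_congr rfl fun ω _ => by rw [this ω, mul_one]]
  rw [← ENNReal.ofReal_sum_of_nonneg fun ω _ => hp ω, hpsum, ENNReal.ofReal_one]

def mS (Ω : Type) [Fintype Ω] [MeasurableSpace Ω] : MeasurableSpace (Ω × Belief Ω) :=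
  MeasurableSpace.comap (fun z : Ω × Belief Ω => z.2) inferInstance

lemma condexp_iff_setIntegral (p : Ω → ℝ) (hp : ∀ ω, 0 ≤ p ω) (hpsum : ∑ ω : Ω, p ω = 1)
    (lam : Ω → Measure (Belief Ω)) (hprob : ∀ ω, IsProbabilityMeasure (lam ω)) (ω' : Ω) :
    ((fun z : Ω × Belief Ω => (z.2).1 ω')
      =ᵐ[jointP p lam]
      (jointP p lam)[Set.indicator {z : Ω × Belief Ω | z.1 = ω'} (fun _ => (1 : ℝ)) |
        mS Ω])
    ↔ ∀ A : Set (Belief Ω), MeasurableSet A →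
        ∫ z in Prod.snd ⁻¹' A, (z.2).1 ω' ∂(jointP p lam)
          = ∫ z in Prod.snd ⁻¹' A,
              Set.indicator {z : Ω × Belief Ω | z.1 = ω'} (fun _ => (1 : ℝ)) z ∂(jointP p lam) := by
  set P := jointP p lam with hP
  haveI : IsProbabilityMeasure P := jointP_isProb p hp hpsum lam hprob
  have hm : mS Ω ≤ (inferInstance : MeasurableSpace (Ω × Belief Ω)) := measurable_snd.comap_le
  haveI : SigmaFinite (P.trim hm) := inferInstance
  set f1 : Ω × Belief Ω → ℝ := fun z => (z.2).1 ω' with hf1def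
  set ind : Ω × Belief Ω → ℝ :=
    Set.indicator {z : Ω × Belief Ω | z.1 = ω'} (fun _ => (1 : ℝ)) with hinddef
  have hsetm : MeasurableSet {z : Ω × Belief Ω | z.1 = ω'} :=
    measurable_fst (measurableSet_singleton ω')
  have hind_int : Integrable ind P := (integrable_const (1 : ℝ)).indicator hsetm
  have hf1_meas : Measurable f1 := (measurable_eval ω').comp measurable_snd
  have hf1_bd : ∀ z, |f1 z| ≤ 1 := fun z =>
    abs_le.2 ⟨le_trans (by norm_num) (eval_nonneg ω' z.2), eval_le_one ω' z.2⟩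
  have hf1_int : Integrable f1 P :=
    Integrable.mono' (integrable_const 1) hf1_meas.aestronglyMeasurable
      (Filter.Eventually.of_forall hf1_bd)
  have hf1_m : Measurable[mS Ω] f1 :=
    (measurable_eval ω').comp (Measurable.of_comap_le le_rfl)
  constructor
  · intro h A hA
    have hs : MeasurableSet[mS Ω] (Prod.snd ⁻¹' A) := ⟨A, hA, rfl⟩
    calc ∫ z in Prod.snd ⁻¹' A, f1 z ∂P
        = ∫ z in Prod.snd ⁻¹' A, (P[ind | mS Ω]) z ∂P :=
          setIntegral_congr_ae (hm _ hs) (h.mono fun x hx _ => hx)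
      _ = ∫ z in Prod.snd ⁻¹' A, ind z ∂P := setIntegral_condExp hm hind_int hs
  · intro h
    refine ae_eq_condExp_of_forall_setIntegral_eq hm hind_int
      (fun s _ _ => hf1_int.integrableOn) (fun s hs _ => ?_)
      ⟨f1, hf1_m.stronglyMeasurable, Filter.EventuallyEq.rfl⟩
    obtain ⟨A, hA, rfl⟩ := hs
    exact h A hA

lemma setIntegral_f1 (p : Ω → ℝ) (hp : ∀ ω, 0 ≤ p ω)
    (lam : Ω → Measure (Belief Ω)) [∀ ω, IsFiniteMeasure (lam ω)] (ω' : Ω)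
    {A : Set (Belief Ω)} (hA : MeasurableSet A) :
    ∫ z in Prod.snd ⁻¹' A, (z.2).1 ω' ∂(jointP p lam)
      = ∑ ω : Ω, p ω * ∫ x in A, x.1 ω' ∂(lam ω) :=
  setIntegral_jointP p hp lam (fun z => (z.2).1 ω')
    ((measurable_eval ω').comp measurable_snd)
    (fun z => abs_le.2 ⟨le_trans (by norm_num) (eval_nonneg ω' z.2), eval_le_one ω' z.2⟩) hA

lemma setIntegral_ind (p : Ω → ℝ) (hp : ∀ ω, 0 ≤ p ω)
    (lam : Ω → Measure (Belief Ω)) [∀ ω, IsFiniteMeasure (lam ω)] (ω' : Ω)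
    {A : Set (Belief Ω)} (hA : MeasurableSet A) :
    ∫ z in Prod.snd ⁻¹' A,
        Set.indicator {z : Ω × Belief Ω | z.1 = ω'} (fun _ => (1 : ℝ)) z ∂(jointP p lam)
      = p ω' * ((lam ω' A).toReal) := by
  classical
  have hsetm : MeasurableSet {z : Ω × Belief Ω | z.1 = ω'} :=
    measurable_fst (measurableSet_singleton ω')
  have hmeas : Measurable (Set.indicator {z : Ω × Belief Ω | z.1 = ω'} (fun _ => (1 : ℝ))) :=
    measurable_const.indicator hsetm
  have hbd : ∀ z, |Set.indicator {z : Ω × Belief Ω | z.1 = ω'} (fun _ => (1 : ℝ)) z| ≤ 1 := by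
    intro z
    rw [Set.indicator_apply]
    split <;> norm_num
  rw [setIntegral_jointP p hp lam _ hmeas hbd hA]
  have hinner : ∀ ω : Ω,
      (∫ x in A, Set.indicator {z : Ω × Belief Ω | z.1 = ω'} (fun _ => (1 : ℝ)) (ω, x) ∂(lam ω))
        = (if ω = ω' then (1:ℝ) else 0) * (lam ω A).toReal := by
    intro ω
    have : ∀ x : Belief Ω,
        Set.indicator {z : Ω × Belief Ω | z.1 = ω'} (fun _ => (1 : ℝ)) (ω, x)
          = (if ω = ω' then (1:ℝ) else 0) := by
      intro x
      rw [Set.indicator_apply]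
      simp [Set.mem_setOf_eq]
    simp_rw [this]
    rw [setIntegral_const, smul_eq_mul, mul_comm, measureReal_def]
  simp_rw [hinner]
  rw [Finset.sum_eq_single ω' (fun b _ hb => by simp [hb])
    (fun h => absurd (Finset.mem_univ ω') h)]
  simp

lemma lintegral_avg (p : Ω → ℝ) (hp : ∀ ω, 0 < p ω)
    (lam : Ω → Measure (Belief Ω)) [∀ ω, IsFiniteMeasure (lam ω)] (ω : Ω)
    {A : Set (Belief Ω)} (hA : MeasurableSet A) :
    ∫⁻ x in A, ENNReal.ofReal (x.1 ω / p ω) ∂(∑ ω' : Ω, ENNReal.ofReal (p ω') • lam ω')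
      = ENNReal.ofReal ((∑ ω'' : Ω, p ω'' * ∫ x in A, x.1 ω ∂(lam ω'')) / p ω) := by
  have hIpos : ∀ ω'' : Ω, 0 ≤ ∫ x in A, x.1 ω ∂(lam ω'') := fun ω'' =>
    setIntegral_nonneg hA fun x _ => eval_nonneg ω x
  have hI : ∀ ω'' : Ω, ∫⁻ x in A, ENNReal.ofReal (x.1 ω / p ω) ∂(lam ω'')
      = ENNReal.ofReal ((∫ x in A, x.1 ω ∂(lam ω'')) / p ω) := by
    intro ω''
    have hint : Integrable (fun x : Belief Ω => x.1 ω) ((lam ω'').restrict A) :=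
      Integrable.mono' (integrable_const 1) (measurable_eval ω).aestronglyMeasurable
        (Filter.Eventually.of_forall fun x =>
          abs_le.2 ⟨le_trans (by norm_num) (eval_nonneg ω x), eval_le_one ω x⟩)
    rw [← ofReal_integral_eq_lintegral_ofReal (hint.div_const (p ω))
      (Filter.Eventually.of_forall fun x => div_nonneg (eval_nonneg ω x) (hp ω).le),
      integral_div]
  rw [restrict_finset_sum (fun ω' => ENNReal.ofReal (p ω') • lam ω') A,
    lintegral_finset_sum_measure]
  calc ∑ ω'' : Ω, ∫⁻ x, ENNReal.ofReal (x.1 ω / p ω)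
          ∂((ENNReal.ofReal (p ω'') • lam ω'').restrict A)
      = ∑ ω'' : Ω, ENNReal.ofReal (p ω'' * ((∫ x in A, x.1 ω ∂(lam ω'')) / p ω)) := by
        refine Finset.sum_congr rfl fun ω'' _ => ?_
        rw [Measure.restrict_smul, lintegral_smul_measure, hI ω'',
          ENNReal.ofReal_mul (hp ω'').le, smul_eq_mul]
    _ = ENNReal.ofReal (∑ ω'' : Ω, p ω'' * ((∫ x in A, x.1 ω ∂(lam ω'')) / p ω)) := by
        rw [ENNReal.ofReal_sum_of_nonneg fun ω'' _ =>
          mul_nonneg (hp ω'').le (div_nonneg (hIpos ω'') (hp ω).le)]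
    _ = ENNReal.ofReal ((∑ ω'' : Ω, p ω'' * ∫ x in A, x.1 ω ∂(lam ω'')) / p ω) := by
        rw [Finset.sum_div]
        congr 1
        exact Finset.sum_congr rfl fun ω'' _ => (mul_div_assoc _ _ _).symm

/-- the value of the persuasion problem -/
def Val (p : Ω → ℝ) (n : ℕ) (v : Ω → (Fin n → Belief Ω) → ℝ) : ℝ :=
  sSup { r | ∃ μ : Ω → Measure (Fin n → Belief Ω),
    Feasible p n μ ∧ r = ∑ ω : Ω, p ω * ∫ x, v ω x ∂(μ ω) }

end

/-- one-receiver conditional feasibility is equivalent to each `lam ω`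
being the average measure `λ̄ = ∑ ω' p(ω')·λ^{ω'}` weighted by `x(ω)/p(ω)`. -/
theorem feasible1_iff_weighting_of_average
    {Ω : Type} [Fintype Ω] [Nonempty Ω] [MeasurableSpace Ω] [MeasurableSingletonClass Ω]
    (p : Ω → ℝ) (hp : ∀ ω, 0 < p ω) (hpsum : ∑ ω : Ω, p ω = 1)
    (lam : Ω → Measure (Belief Ω)) (hprob : ∀ ω, IsProbabilityMeasure (lam ω)) :
    Feasible1 p lam ↔
      (∀ (ω : Ω) (A : Set (Belief Ω)), MeasurableSet A →
        lam ω A = ∫⁻ x in A, ENNReal.ofReal (x.1 ω / p ω)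
          ∂(∑ ω' : Ω, ENNReal.ofReal (p ω') • lam ω')) := by
  haveI : ∀ ω, IsFiniteMeasure (lam ω) := fun ω => haveI := hprob ω; inferInstance
  have hp0 : ∀ ω, 0 ≤ p ω := fun ω => (hp ω).le
  constructor
  · rintro ⟨-, h⟩ ω A hA
    have h2 := (condexp_iff_setIntegral p hp0 hpsum lam hprob ω).1 (h ω) A hA
    rw [setIntegral_f1 p hp0 lam ω hA, setIntegral_ind p hp0 lam ω hA] at h2
    rw [lintegral_avg p hp lam ω hA, h2,
      mul_div_cancel_left₀ _ (hp ω).ne', ENNReal.ofReal_toReal (measure_ne_top _ _)]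
  · intro h
    refine ⟨hprob, fun ω' => ?_⟩
    refine (condexp_iff_setIntegral p hp0 hpsum lam hprob ω').2 fun A hA => ?_
    rw [setIntegral_f1 p hp0 lam ω' hA, setIntegral_ind p hp0 lam ω' hA]
    have hAv := h ω' A hA
    rw [lintegral_avg p hp lam ω' hA] at hAv
    have hS : 0 ≤ ∑ ω'' : Ω, p ω'' * ∫ x in A, x.1 ω' ∂(lam ω'') :=
      Finset.sum_nonneg fun ω'' _ => mul_nonneg (hp0 ω'')
        (setIntegral_nonneg hA fun x _ => eval_nonneg ω' x)
    rw [hAv, ENNReal.toReal_ofReal (div_nonneg hS (hp0 ω')),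
      mul_div_cancel₀ _ (hp ω').ne']
end

section
/- Let Ω be a nonempty finite set, p a full-support probability vector on Ω, n ≥ 1, and for each ω ∈ Ω let v^ω : Δ(Ω)^n → ℝ be bounded and upper semicontinuous. Then the value Val of the persuasion problem equals the supremum, over all choices of collections (λ_i^ω)_{ω∈Ω} (one per receiver i ∈ {1,…,n}) each of which is a feasible collection of conditional belief distributions for prior p in the single-receiver problem, of ∑_{ω∈Ω} p(ω) · sup{ ∫ v^ω dπ : π a Borel probability measure on Δ(Ω)^n whose i-th marginal equals λ_i^ω for every i }. -/
open MeasureTheory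

set_option linter.unusedSectionVars false

section AuxSec
open MeasureTheory Set
variable {Ω : Type} [Fintype Ω] [MeasurableSpace Ω] [MeasurableSingletonClass Ω]

namespace PersuasionAux

open MeasureTheory Set

variable {Ω : Type} [Fintype Ω] [MeasurableSpace Ω] [MeasurableSingletonClass Ω]

lemma integrable_of_bound {X : Type*} [MeasurableSpace X] {ν : Measure X}
    (hν : ν Set.univ ≠ ⊤) {f : X → ℝ} (hf : AEStronglyMeasurable f ν) {C : ℝ}
    (h : ∀ x, |f x| ≤ C) : Integrable f ν := by
  haveI : IsFiniteMeasure ν := ⟨lt_top_iff_ne_top.mpr hν⟩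
  exact ⟨hf, HasFiniteIntegral.of_bounded (C := C) (Filter.Eventually.of_forall fun x => by
    simpa [Real.norm_eq_abs] using h x)⟩

lemma abs_integral_le {X : Type*} [MeasurableSpace X] (π : Measure X) [IsProbabilityMeasure π]
    {f : X → ℝ} {C : ℝ} (h : ∀ x, |f x| ≤ C) : |∫ x, f x ∂π| ≤ C := by
  have := norm_integral_le_of_norm_le_const (μ := π) (f := f) (C := C)
    (Filter.Eventually.of_forall fun x => by simpa [Real.norm_eq_abs] using h x)
  simpa [Real.norm_eq_abs, measure_univ] using this

lemma isProbabilityMeasure_jointP (p : Ω → ℝ) (hp0 : ∀ ω, 0 ≤ p ω)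
    (hpsum : ∑ ω : Ω, p ω = 1) {X : Type} [MeasurableSpace X] (μ : Ω → Measure X)
    (hμ : ∀ ω, IsProbabilityMeasure (μ ω)) : IsProbabilityMeasure (jointP p μ) := by
  constructor
  unfold jointP
  rw [Measure.finset_sum_apply]
  have h : ∀ ω : Ω, (ENNReal.ofReal (p ω) • ((Measure.dirac ω).prod (μ ω))) Set.univ
      = ENNReal.ofReal (p ω) := by
    intro ω
    haveI := hμ ω
    simp [Measure.smul_apply]
  rw [Finset.sum_congr rfl fun ω _ => h ω,
    ← ENNReal.ofReal_sum_of_nonneg (fun ω _ => hp0 ω), hpsum, ENNReal.ofReal_one]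

lemma jointP_restrict (p : Ω → ℝ) {X : Type} [MeasurableSpace X] (μ : Ω → Measure X)
    (hμ : ∀ ω, IsProbabilityMeasure (μ ω)) {S : Set (Ω × X)} (hS : MeasurableSet S) :
    (jointP p μ).restrict S
      = ∑ ω : Ω, ENNReal.ofReal (p ω) • (((μ ω).restrict (Prod.mk ω ⁻¹' S)).map (Prod.mk ω)) := by
  haveI := hμ
  unfold jointP
  ext t ht
  simp only [Measure.restrict_apply ht, Measure.finset_sum_apply, Measure.smul_apply,
    smul_eq_mul]
  refine Finset.sum_congr rfl fun ω _ => ?_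
  congr 1
  rw [Measure.dirac_prod, Measure.map_apply measurable_prodMk_left (ht.inter hS),
    Measure.map_apply measurable_prodMk_left ht,
    Measure.restrict_apply (measurable_prodMk_left ht)]
  rfl

lemma setIntegral_jointP (p : Ω → ℝ) (hp0 : ∀ ω, 0 ≤ p ω) {X : Type} [MeasurableSpace X]
    (μ : Ω → Measure X) (hμ : ∀ ω, IsProbabilityMeasure (μ ω))
    {f : Ω × X → ℝ} (hf : Measurable f) {C : ℝ} (hbd : ∀ z, |f z| ≤ C)
    {S : Set (Ω × X)} (hS : MeasurableSet S) :
    ∫ z in S, f z ∂(jointP p μ) = ∑ ω : Ω, p ω * ∫ x in Prod.mk ω ⁻¹' S, f (ω, x) ∂(μ ω) := by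
  haveI := hμ
  rw [jointP_restrict p μ hμ hS]
  rw [integral_finset_sum_measure (by
    intro ω _
    refine integrable_of_bound ?_ hf.aestronglyMeasurable hbd
    refine ENNReal.mul_ne_top ENNReal.ofReal_ne_top ?_
    exact measure_ne_top _ _)]
  refine Finset.sum_congr rfl fun ω _ => ?_
  rw [integral_smul_measure,
    integral_map measurable_prodMk_left.aemeasurable hf.aestronglyMeasurable,
    ENNReal.toReal_ofReal (hp0 ω), smul_eq_mul]

lemma measurableSet_fst_eq {X : Type} [MeasurableSpace X] (ω' : Ω) :
    MeasurableSet {z : Ω × X | z.1 = ω'} := by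
  have h : {z : Ω × X | z.1 = ω'} = Prod.fst ⁻¹' {ω'} := by
    ext z; simp
  rw [h]
  exact measurable_fst (measurableSet_singleton ω')

lemma setIntegral_indicator_jointP (p : Ω → ℝ) (hp0 : ∀ ω, 0 ≤ p ω) {X : Type}
    [MeasurableSpace X] (μ : Ω → Measure X) (hμ : ∀ ω, IsProbabilityMeasure (μ ω)) (ω' : Ω)
    {S : Set (Ω × X)} (hS : MeasurableSet S) :
    ∫ z in S, Set.indicator {z : Ω × X | z.1 = ω'} (fun _ => (1:ℝ)) z ∂(jointP p μ)
      = p ω' * ((μ ω') (Prod.mk ω' ⁻¹' S)).toReal := by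
  classical
  haveI := hμ
  rw [setIntegral_jointP p hp0 μ hμ
    (measurable_const.indicator (measurableSet_fst_eq ω')) (C := 1)
    (fun z => by by_cases h : z ∈ {z : Ω × X | z.1 = ω'} <;> simp [Set.indicator_apply, h]) hS]
  have hterm : ∀ ω : Ω,
      (∫ x in Prod.mk ω ⁻¹' S,
        Set.indicator {z : Ω × X | z.1 = ω'} (fun _ => (1:ℝ)) (ω, x) ∂(μ ω))
      = if ω = ω' then ((μ ω) (Prod.mk ω ⁻¹' S)).toReal else 0 := by
    intro ω
    by_cases h : ω = ω'
    · simp only [Set.indicator_apply, Set.mem_setOf_eq, h, if_true, if_pos]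
      rw [setIntegral_const]
      simp
      rfl
    · simp only [Set.indicator_apply, Set.mem_setOf_eq, h, if_false]
      simp
  rw [Finset.sum_congr rfl fun ω _ => by rw [hterm ω]]
  rw [show (∑ ω : Ω, p ω * if ω = ω' then ((μ ω) (Prod.mk ω ⁻¹' S)).toReal else 0)
      = ∑ ω : Ω, if ω = ω' then p ω * ((μ ω) (Prod.mk ω ⁻¹' S)).toReal else 0 from
    Finset.sum_congr rfl fun ω _ => by split_ifs <;> simp]
  rw [Finset.sum_ite_eq' Finset.univ ω' fun ω => p ω * ((μ ω) (Prod.mk ω ⁻¹' S)).toReal]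
  simp

end PersuasionAux

end AuxSec

section Part2
open MeasureTheory Set
variable {Ω : Type} [Fintype Ω] [MeasurableSpace Ω] [MeasurableSingletonClass Ω]
namespace PersuasionAux

lemma belief_coord_nonneg (b : Belief Ω) (ω' : Ω) : 0 ≤ b.1 ω' := b.2.1 ω'

lemma belief_coord_le_one (b : Belief Ω) (ω' : Ω) : b.1 ω' ≤ 1 := by
  have h := Finset.single_le_sum (f := b.1) (fun i _ => b.2.1 i) (Finset.mem_univ ω')
  rwa [b.2.2] at h

lemma measurable_belief_coord (ω' : Ω) : Measurable fun b : Belief Ω => b.1 ω' :=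
  (measurable_pi_apply ω').comp measurable_subtype_coe

/-- Characterization of the feasibility (conditional-expectation) condition via set integrals. -/
lemma feasible_cond_iff (p : Ω → ℝ) (hp0 : ∀ ω, 0 ≤ p ω) (hpsum : ∑ ω : Ω, p ω = 1)
    {X : Type} [MeasurableSpace X] (μ : Ω → Measure X) (hμ : ∀ ω, IsProbabilityMeasure (μ ω))
    (φ : X → Belief Ω) (hφ : Measurable φ) (ω' : Ω) :
    ((fun z : Ω × X => (φ z.2).1 ω')
        =ᵐ[jointP p μ]
        (jointP p μ)[Set.indicator {z : Ω × X | z.1 = ω'} (fun _ => (1 : ℝ)) |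
          MeasurableSpace.comap (fun z : Ω × X => φ z.2) inferInstance])
    ↔ ∀ A : Set (Belief Ω), MeasurableSet A →
        (∑ ω : Ω, p ω * ∫ x in φ ⁻¹' A, (φ x).1 ω' ∂(μ ω))
          = p ω' * ((μ ω') (φ ⁻¹' A)).toReal := by
  haveI hP : IsProbabilityMeasure (jointP p μ) := isProbabilityMeasure_jointP p hp0 hpsum μ hμ
  have hgmeas : Measurable (fun z : Ω × X => φ z.2) := hφ.comp measurable_snd
  have hm : MeasurableSpace.comap (fun z : Ω × X => φ z.2) inferInstance ≤ _ :=
    hgmeas.comap_le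
  have hcoord := measurable_belief_coord (Ω := Ω) ω'
  have hg0meas : Measurable fun z : Ω × X => (φ z.2).1 ω' := hcoord.comp hgmeas
  have hg0bd : ∀ z : Ω × X, |(φ z.2).1 ω'| ≤ 1 := fun z => by
    rw [abs_of_nonneg (belief_coord_nonneg _ _)]
    exact belief_coord_le_one _ _
  have hf_int : Integrable (Set.indicator {z : Ω × X | z.1 = ω'} fun _ => (1:ℝ))
      (jointP p μ) :=
    integrable_of_bound (measure_ne_top _ _)
      ((measurable_const.indicator (measurableSet_fst_eq ω'))).aestronglyMeasurable
      (C := 1)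
      (fun z => by by_cases h : z ∈ {z : Ω × X | z.1 = ω'} <;> simp [Set.indicator_apply, h])
  constructor
  · intro h A hA
    have hSm0 : MeasurableSet ((fun z : Ω × X => φ z.2) ⁻¹' A) := hgmeas hA
    have hSm : MeasurableSet[MeasurableSpace.comap (fun z : Ω × X => φ z.2) inferInstance]
        ((fun z : Ω × X => φ z.2) ⁻¹' A) :=
      MeasurableSpace.measurableSet_comap.mpr ⟨A, hA, rfl⟩
    have h1 : ∫ z in (fun z : Ω × X => φ z.2) ⁻¹' A, (φ z.2).1 ω' ∂(jointP p μ)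
        = ∫ z in (fun z : Ω × X => φ z.2) ⁻¹' A,
            Set.indicator {z : Ω × X | z.1 = ω'} (fun _ => (1 : ℝ)) z ∂(jointP p μ) := by
      rw [setIntegral_congr_ae hSm0 (h.mono fun z hz _ => hz)]
      exact setIntegral_condExp hm hf_int hSm
    have h2 := setIntegral_jointP p hp0 μ hμ hg0meas (C := 1) hg0bd hSm0
    have h3 := setIntegral_indicator_jointP p hp0 μ hμ ω' hSm0
    have hpre : ∀ ω : Ω, Prod.mk ω ⁻¹' ((fun z : Ω × X => φ z.2) ⁻¹' A) = φ ⁻¹' A :=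
      fun ω => rfl
    simp only [hpre] at h2 h3
    rw [← h2, h1, h3]
  · intro h
    refine ae_eq_condExp_of_forall_setIntegral_eq hm hf_int ?_ ?_ ?_
    · intro s _ _
      exact (integrable_of_bound (measure_ne_top _ _) hg0meas.aestronglyMeasurable
        hg0bd).integrableOn
    · intro s hs _
      rw [MeasurableSpace.measurableSet_comap] at hs
      obtain ⟨A, hA, rfl⟩ := hs
      have hSm0 : MeasurableSet ((fun z : Ω × X => φ z.2) ⁻¹' A) := hgmeas hA
      have h2 := setIntegral_jointP p hp0 μ hμ hg0meas (C := 1) hg0bd hSm0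
      have h3 := setIntegral_indicator_jointP p hp0 μ hμ ω' hSm0
      have hpre : ∀ ω : Ω, Prod.mk ω ⁻¹' ((fun z : Ω × X => φ z.2) ⁻¹' A) = φ ⁻¹' A :=
        fun ω => rfl
      simp only [hpre] at h2 h3
      rw [h2, h3]
      exact h A hA
    · have hg : @Measurable _ _
          (MeasurableSpace.comap (fun z : Ω × X => φ z.2) inferInstance) _
          (fun z : Ω × X => φ z.2) := Measurable.of_comap_le le_rfl
      exact StronglyMeasurable.aestronglyMeasurable (Measurable.stronglyMeasurable (hcoord.comp hg))

end PersuasionAux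
end Part2

section Part3
open MeasureTheory Set
variable {Ω : Type} [Fintype Ω] [MeasurableSpace Ω] [MeasurableSingletonClass Ω]
namespace PersuasionAux

/-- Explicit single-receiver feasibility condition. -/
def Cond1 (p : Ω → ℝ) (lam : Ω → Measure (Belief Ω)) : Prop :=
  ∀ ω' : Ω, ∀ A : Set (Belief Ω), MeasurableSet A →
    (∑ ω : Ω, p ω * ∫ b in A, b.1 ω' ∂(lam ω)) = p ω' * ((lam ω') A).toReal

/-- Explicit n-receiver feasibility condition. -/
def CondN (p : Ω → ℝ) (n : ℕ) (μ : Ω → Measure (Fin n → Belief Ω)) : Prop :=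
  ∀ (i : Fin n) (ω' : Ω), ∀ A : Set (Belief Ω), MeasurableSet A →
    (∑ ω : Ω, p ω * ∫ x in (fun q : Fin n → Belief Ω => q i) ⁻¹' A, (x i).1 ω' ∂(μ ω))
      = p ω' * ((μ ω') ((fun q : Fin n → Belief Ω => q i) ⁻¹' A)).toReal

lemma feasible1_iff (p : Ω → ℝ) (hp0 : ∀ ω, 0 ≤ p ω) (hpsum : ∑ ω : Ω, p ω = 1)
    (lam : Ω → Measure (Belief Ω)) :
    Feasible1 p lam ↔ (∀ ω, IsProbabilityMeasure (lam ω)) ∧ Cond1 p lam := by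
  constructor
  · rintro ⟨h1, h2⟩
    refine ⟨h1, fun ω' A hA => ?_⟩
    exact (feasible_cond_iff p hp0 hpsum lam h1 (fun b => b) measurable_id ω').mp (h2 ω') A hA
  · rintro ⟨h1, h2⟩
    refine ⟨h1, fun ω' => ?_⟩
    exact (feasible_cond_iff p hp0 hpsum lam h1 (fun b => b) measurable_id ω').mpr
      (fun A hA => h2 ω' A hA)

lemma feasible_iff (p : Ω → ℝ) (hp0 : ∀ ω, 0 ≤ p ω) (hpsum : ∑ ω : Ω, p ω = 1)
    (n : ℕ) (μ : Ω → Measure (Fin n → Belief Ω)) :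
    Feasible p n μ ↔ (∀ ω, IsProbabilityMeasure (μ ω)) ∧ CondN p n μ := by
  constructor
  · rintro ⟨h1, h2⟩
    refine ⟨h1, fun i ω' A hA => ?_⟩
    exact (feasible_cond_iff p hp0 hpsum μ h1 (fun q : Fin n → Belief Ω => q i)
      (measurable_pi_apply i) ω').mp (h2 i ω') A hA
  · rintro ⟨h1, h2⟩
    refine ⟨h1, fun i ω' => ?_⟩
    exact (feasible_cond_iff p hp0 hpsum μ h1 (fun q : Fin n → Belief Ω => q i)
      (measurable_pi_apply i) ω').mpr (fun A hA => h2 i ω' A hA)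

lemma marginal_setIntegral {n : ℕ} (ν : Measure (Fin n → Belief Ω)) (i : Fin n) (ω' : Ω)
    {A : Set (Belief Ω)} (hA : MeasurableSet A) :
    ∫ b in A, b.1 ω' ∂(ν.map (fun q : Fin n → Belief Ω => q i))
      = ∫ x in (fun q : Fin n → Belief Ω => q i) ⁻¹' A, (x i).1 ω' ∂ν := by
  rw [Measure.restrict_map (measurable_pi_apply i) hA,
    integral_map (measurable_pi_apply i).aemeasurable
      (measurable_belief_coord ω').aestronglyMeasurable]

lemma marginal_apply {n : ℕ} (ν : Measure (Fin n → Belief Ω)) (i : Fin n)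
    {A : Set (Belief Ω)} (hA : MeasurableSet A) :
    (ν.map (fun q : Fin n → Belief Ω => q i)) A = ν ((fun q : Fin n → Belief Ω => q i) ⁻¹' A) :=
  Measure.map_apply (measurable_pi_apply i) hA

lemma cond1_of_condN (p : Ω → ℝ) {n : ℕ} {μ : Ω → Measure (Fin n → Belief Ω)}
    (h : CondN p n μ) (i : Fin n) :
    Cond1 p (fun ω => (μ ω).map (fun q : Fin n → Belief Ω => q i)) := by
  intro ω' A hA
  simp only [marginal_setIntegral _ i ω' hA, marginal_apply _ i hA]
  exact h i ω' A hA

lemma condN_of_cond1 (p : Ω → ℝ) {n : ℕ} {μ : Ω → Measure (Fin n → Belief Ω)}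
    (h : ∀ i : Fin n, Cond1 p (fun ω => (μ ω).map (fun q : Fin n → Belief Ω => q i))) :
    CondN p n μ := by
  intro i ω' A hA
  have := h i ω' A hA
  simpa only [marginal_setIntegral _ i ω' hA, marginal_apply _ i hA] using this

lemma cond1_dirac (p : Ω → ℝ) (hp0 : ∀ ω, 0 ≤ p ω) (hpsum : ∑ ω : Ω, p ω = 1) :
    Cond1 p (fun _ => Measure.dirac (⟨p, hp0, hpsum⟩ : Belief Ω)) := by
  classical
  intro ω' A hA
  set bp : Belief Ω := ⟨p, hp0, hpsum⟩ with hbp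
  have hint : ∫ b in A, b.1 ω' ∂(Measure.dirac bp)
      = if bp ∈ A then p ω' else 0 := by
    rw [MeasureTheory.restrict_dirac' hA]
    by_cases h : bp ∈ A
    · rw [if_pos h, if_pos h,
        integral_dirac' _ bp (measurable_belief_coord ω').stronglyMeasurable]
    · rw [if_neg h, if_neg h, integral_zero_measure]
  rw [Finset.sum_congr rfl fun ω _ => by rw [hint]]
  rw [Measure.dirac_apply' bp hA]
  by_cases h : bp ∈ A
  · rw [Set.indicator_of_mem h]
    simp only [if_pos h, ← Finset.sum_mul, hpsum, one_mul, Pi.one_apply]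
    simp
  · rw [Set.indicator_of_notMem h]
    simp [if_neg h]

lemma map_eval_pi {n : ℕ} (ν : Fin n → Measure (Belief Ω))
    (hν : ∀ i, IsProbabilityMeasure (ν i)) (i : Fin n) :
    (Measure.pi ν).map (fun q : Fin n → Belief Ω => q i) = ν i := by
  haveI := hν
  ext A hA
  rw [marginal_apply _ i hA]
  have h1 : ((fun q : Fin n → Belief Ω => q i) ⁻¹' A) = Function.eval i ⁻¹' A := rfl
  rw [h1, ← Set.univ_pi_update_univ, Measure.pi_pi,
    Finset.prod_eq_single i (fun j _ hj => by
      rw [Function.update_of_ne hj]; exact measure_univ)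
      (fun h => absurd (Finset.mem_univ i) h),
    Function.update_self]

end PersuasionAux
end Part3

namespace PersuasionAux
open MeasureTheory

/-- The set of values of couplings with prescribed marginals. -/
def innerSet {Ω : Type} [Fintype Ω] [MeasurableSpace Ω] (n : ℕ)
    (v : Ω → (Fin n → Belief Ω) → ℝ) (lam : Fin n → Ω → Measure (Belief Ω)) (ω : Ω) :
    Set ℝ :=
  { s : ℝ | ∃ π : Measure (Fin n → Belief Ω),
      IsProbabilityMeasure π ∧
      (∀ i : Fin n, π.map (fun q : Fin n → Belief Ω => q i) = lam i ω) ∧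
      s = ∫ x, v ω x ∂π }

end PersuasionAux


/-- primal value representation (persuasion as optimal transport),
Corollary `cor_persuasion_as_transport`. -/
theorem value_eq_sup_over_marginals_and_couplings
    {Ω : Type} [Fintype Ω] [Nonempty Ω] [MeasurableSpace Ω] [MeasurableSingletonClass Ω]
    (p : Ω → ℝ) (hp : ∀ ω, 0 < p ω) (hpsum : ∑ ω : Ω, p ω = 1)
    (n : ℕ) (hn : 1 ≤ n)
    (v : Ω → (Fin n → Belief Ω) → ℝ)
    (hvb : ∃ C : ℝ, ∀ ω x, |v ω x| ≤ C)
    (hvusc : ∀ ω, UpperSemicontinuous (v ω)) :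
    Val p n v =
      sSup { r : ℝ | ∃ lam : Fin n → Ω → Measure (Belief Ω),
        (∀ i : Fin n, Feasible1 p (lam i)) ∧
        r = ∑ ω : Ω, p ω *
          sSup { s : ℝ | ∃ π : Measure (Fin n → Belief Ω),
            IsProbabilityMeasure π ∧
            (∀ i : Fin n, π.map (fun q : Fin n → Belief Ω => q i) = lam i ω) ∧
            s = ∫ x, v ω x ∂π } } := by
  classical
  obtain ⟨C, hC⟩ := hvb
  have hp0 : ∀ ω, 0 ≤ p ω := fun ω => (hp ω).le
  have hiC : ∀ (ω : Ω) (π : Measure (Fin n → Belief Ω)), IsProbabilityMeasure π →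
      |∫ x, v ω x ∂π| ≤ C := fun ω π hπ => by
    haveI := hπ; exact PersuasionAux.abs_integral_le π (hC ω)
  have hrw : { r : ℝ | ∃ lam : Fin n → Ω → Measure (Belief Ω),
        (∀ i : Fin n, Feasible1 p (lam i)) ∧
        r = ∑ ω : Ω, p ω *
          sSup { s : ℝ | ∃ π : Measure (Fin n → Belief Ω),
            IsProbabilityMeasure π ∧
            (∀ i : Fin n, π.map (fun q : Fin n → Belief Ω => q i) = lam i ω) ∧
            s = ∫ x, v ω x ∂π } }
      = { r : ℝ | ∃ lam : Fin n → Ω → Measure (Belief Ω),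
        (∀ i : Fin n, Feasible1 p (lam i)) ∧
        r = ∑ ω : Ω, p ω * sSup (PersuasionAux.innerSet n v lam ω) } := rfl
  rw [hrw]
  unfold Val
  have hSbdd : ∀ lam ω, BddAbove (PersuasionAux.innerSet n v lam ω) := by
    intro lam ω
    refine ⟨C, ?_⟩
    rintro s ⟨π, hπ, -, rfl⟩
    exact (abs_le.mp (hiC ω π hπ)).2
  have hSne : ∀ (lam : Fin n → Ω → Measure (Belief Ω)) (ω : Ω),
      (∀ i, IsProbabilityMeasure (lam i ω)) →
      (PersuasionAux.innerSet n v lam ω).Nonempty := by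
    intro lam ω h
    haveI := h
    exact ⟨∫ x, v ω x ∂(Measure.pi fun i => lam i ω),
      ⟨Measure.pi fun i => lam i ω, inferInstance,
        fun i => PersuasionAux.map_eval_pi _ h i, rfl⟩⟩
  have hsSup_le : ∀ (lam : Fin n → Ω → Measure (Belief Ω)) (ω : Ω),
      (∀ i, IsProbabilityMeasure (lam i ω)) →
      sSup (PersuasionAux.innerSet n v lam ω) ≤ C := fun lam ω h =>
    csSup_le (hSne lam ω h)
      (fun s hs => by obtain ⟨π, hπ, -, rfl⟩ := hs; exact (abs_le.mp (hiC ω π hπ)).2)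
  have hsSup_ge : ∀ (lam : Fin n → Ω → Measure (Belief Ω)) (ω : Ω)
      (π : Measure (Fin n → Belief Ω)), IsProbabilityMeasure π →
      (∀ i, π.map (fun q : Fin n → Belief Ω => q i) = lam i ω) →
      ∫ x, v ω x ∂π ≤ sSup (PersuasionAux.innerSet n v lam ω) := fun lam ω π h1 h2 =>
    le_csSup (hSbdd lam ω) ⟨π, h1, h2, rfl⟩
  have hbpmem : p ∈ stdSimplex ℝ Ω := ⟨hp0, hpsum⟩
  set bp : Belief Ω := ⟨p, hbpmem⟩ with hbpdef
  have hlam0 : ∀ i : Fin n, Feasible1 p (fun _ : Ω => Measure.dirac bp) := by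
    intro i
    exact (PersuasionAux.feasible1_iff p hp0 hpsum _).mpr
      ⟨fun ω => inferInstance, PersuasionAux.cond1_dirac p hp0 hpsum⟩
  have hμ0 : Feasible p n (fun _ : Ω => Measure.dirac (fun _ : Fin n => bp)) := by
    refine (PersuasionAux.feasible_iff p hp0 hpsum n _).mpr ⟨fun ω => inferInstance, ?_⟩
    refine PersuasionAux.condN_of_cond1 p (fun i => ?_)
    have heq0 : (fun ω : Ω => (Measure.dirac (fun _ : Fin n => bp)).map
        (fun q : Fin n → Belief Ω => q i)) = fun _ : Ω => Measure.dirac bp := by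
      funext ω
      rw [Measure.map_dirac' (measurable_pi_apply i)]
    rw [heq0]
    exact PersuasionAux.cond1_dirac p hp0 hpsum
  have hLne : { r | ∃ μ : Ω → Measure (Fin n → Belief Ω),
      Feasible p n μ ∧ r = ∑ ω : Ω, p ω * ∫ x, v ω x ∂(μ ω) }.Nonempty :=
    ⟨_, ⟨_, hμ0, rfl⟩⟩
  have hLbdd : BddAbove { r | ∃ μ : Ω → Measure (Fin n → Belief Ω),
      Feasible p n μ ∧ r = ∑ ω : Ω, p ω * ∫ x, v ω x ∂(μ ω) } := by
    refine ⟨C, ?_⟩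
    rintro r ⟨μ, hμ, rfl⟩
    calc ∑ ω : Ω, p ω * ∫ x, v ω x ∂(μ ω) ≤ ∑ ω : Ω, p ω * C :=
        Finset.sum_le_sum fun ω _ => mul_le_mul_of_nonneg_left
          ((abs_le.mp (hiC ω (μ ω) (hμ.1 ω))).2) (hp0 ω)
      _ = C := by rw [← Finset.sum_mul, hpsum, one_mul]
  have hRne : { r | ∃ lam : Fin n → Ω → Measure (Belief Ω),
      (∀ i : Fin n, Feasible1 p (lam i)) ∧
      r = ∑ ω : Ω, p ω * sSup (PersuasionAux.innerSet n v lam ω) }.Nonempty :=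
    ⟨_, ⟨fun _ _ => Measure.dirac bp, hlam0, rfl⟩⟩
  have hRbdd : BddAbove { r | ∃ lam : Fin n → Ω → Measure (Belief Ω),
      (∀ i : Fin n, Feasible1 p (lam i)) ∧
      r = ∑ ω : Ω, p ω * sSup (PersuasionAux.innerSet n v lam ω) } := by
    refine ⟨C, ?_⟩
    rintro r ⟨lam, hlam, rfl⟩
    calc ∑ ω : Ω, p ω * sSup (PersuasionAux.innerSet n v lam ω)
        ≤ ∑ ω : Ω, p ω * C := Finset.sum_le_sum fun ω _ =>
          mul_le_mul_of_nonneg_left (hsSup_le lam ω (fun i => (hlam i).1 ω)) (hp0 ω)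
      _ = C := by rw [← Finset.sum_mul, hpsum, one_mul]
  apply le_antisymm
  · refine csSup_le hLne ?_
    rintro r ⟨μ, hfeas, rfl⟩
    obtain ⟨hprob, hcond⟩ := (PersuasionAux.feasible_iff p hp0 hpsum n μ).mp hfeas
    set lam : Fin n → Ω → Measure (Belief Ω) :=
      fun i ω => (μ ω).map (fun q : Fin n → Belief Ω => q i) with hlamdef
    have hlam : ∀ i, Feasible1 p (lam i) := fun i =>
      (PersuasionAux.feasible1_iff p hp0 hpsum (lam i)).mpr
        ⟨fun ω => Measure.isProbabilityMeasure_map (measurable_pi_apply i).aemeasurable,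
          PersuasionAux.cond1_of_condN p hcond i⟩
    calc ∑ ω : Ω, p ω * ∫ x, v ω x ∂(μ ω)
        ≤ ∑ ω : Ω, p ω * sSup (PersuasionAux.innerSet n v lam ω) :=
          Finset.sum_le_sum fun ω _ => mul_le_mul_of_nonneg_left
            (hsSup_ge lam ω (μ ω) (hprob ω) (fun i => rfl)) (hp0 ω)
      _ ≤ _ := le_csSup hRbdd ⟨lam, hlam, rfl⟩
  · refine csSup_le hRne ?_
    rintro r ⟨lam, hlam, rfl⟩
    have hprob : ∀ (i : Fin n) (ω : Ω), IsProbabilityMeasure (lam i ω) := fun i => (hlam i).1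
    have hcond1 : ∀ i, PersuasionAux.Cond1 p (lam i) := fun i =>
      ((PersuasionAux.feasible1_iff p hp0 hpsum (lam i)).mp (hlam i)).2
    refine le_of_forall_pos_le_add ?_
    intro ε hε
    have hchoice : ∀ ω : Ω, ∃ π : Measure (Fin n → Belief Ω), IsProbabilityMeasure π ∧
        (∀ i, π.map (fun q : Fin n → Belief Ω => q i) = lam i ω) ∧
        sSup (PersuasionAux.innerSet n v lam ω) - ε < ∫ x, v ω x ∂π := by
      intro ω
      obtain ⟨s, hs, hlt⟩ := exists_lt_of_lt_csSup (hSne lam ω (fun i => hprob i ω))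
        (show sSup (PersuasionAux.innerSet n v lam ω) - ε
          < sSup (PersuasionAux.innerSet n v lam ω) by linarith)
      obtain ⟨π, h1, h2, rfl⟩ := hs
      exact ⟨π, h1, h2, hlt⟩
    choose π hπ1 hπ2 hπ3 using hchoice
    have hfeas : Feasible p n π := by
      refine (PersuasionAux.feasible_iff p hp0 hpsum n π).mpr ⟨hπ1, ?_⟩
      refine PersuasionAux.condN_of_cond1 p (fun i => ?_)
      have heq : (fun ω : Ω => (π ω).map (fun q : Fin n → Belief Ω => q i)) = lam i :=
        funext fun ω => hπ2 ω i
      rw [heq]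
      exact hcond1 i
    calc ∑ ω : Ω, p ω * sSup (PersuasionAux.innerSet n v lam ω)
        ≤ ∑ ω : Ω, p ω * (∫ x, v ω x ∂(π ω) + ε) :=
          Finset.sum_le_sum fun ω _ => mul_le_mul_of_nonneg_left
            (by linarith [hπ3 ω]) (hp0 ω)
      _ = (∑ ω : Ω, p ω * ∫ x, v ω x ∂(π ω)) + ε := by
          simp_rw [mul_add]
          rw [Finset.sum_add_distrib, ← Finset.sum_mul, hpsum, one_mul]
      _ ≤ sSup { r | ∃ μ : Ω → Measure (Fin n → Belief Ω),
            Feasible p n μ ∧ r = ∑ ω : Ω, p ω * ∫ x, v ω x ∂(μ ω) } + ε :=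
          add_le_add_left (le_csSup hLbdd ⟨π, hfeas, rfl⟩) ε
end

section
/- Let Ω be a finite set with |Ω| ≥ 2, p a full-support probability vector on Ω, and ω₀ ∈ Ω. A Borel probability measure λ^{ω₀} on Δ(Ω) is a feasible one-agent marginal at the state ω₀ — i.e., there exists a feasible collection (λ^ω)_{ω∈Ω} of conditional belief distributions for prior p in the single-receiver problem whose ω₀-component is λ^{ω₀} — if and only if ∫_{Δ(Ω)} x(ω)/x(ω₀) dλ^{ω₀}(x) ≤ p(ω)/p(ω₀) for every ω ∈ Ω with ω ≠ ω₀, where the integral is taken in [0,∞] with the conventions 0/0 = 0 and a/0 = ∞ for a > 0. -/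
open MeasureTheory

noncomputable section Helpers

variable {Ω : Type} [Fintype Ω] [MeasurableSpace Ω] [MeasurableSingletonClass Ω]

open ENNReal

lemma meas_eval (ω' : Ω) : Measurable fun x : Belief Ω => x.1 ω' :=
  (measurable_pi_apply ω').comp measurable_subtype_coe

lemma lintegral_jointP (p : Ω → ℝ) {X : Type} [MeasurableSpace X] (μ : Ω → Measure X) [∀ ω, SFinite (μ ω)]
    {h : Ω × X → ℝ≥0∞} (hh : Measurable h) :
    ∫⁻ z, h z ∂(jointP p μ) = ∑ ω : Ω, ENNReal.ofReal (p ω) * ∫⁻ x, h (ω, x) ∂(μ ω) := by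
  rw [jointP, lintegral_finset_sum_measure]
  refine Finset.sum_congr rfl fun ω _ => ?_
  rw [lintegral_smul_measure, smul_eq_mul, Measure.dirac_prod, lintegral_map hh measurable_prodMk_left]

lemma jointP_apply (p : Ω → ℝ) {X : Type} [MeasurableSpace X] (μ : Ω → Measure X) [∀ ω, SFinite (μ ω)]
    {s : Set (Ω × X)} (hs : MeasurableSet s) :
    jointP p μ s = ∑ ω : Ω, ENNReal.ofReal (p ω) * μ ω (Prod.mk ω ⁻¹' s) := by
  rw [jointP, Measure.finset_sum_apply]
  refine Finset.sum_congr rfl fun ω _ => ?_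
  rw [Measure.smul_apply, Measure.dirac_prod, Measure.map_apply measurable_prodMk_left hs,
    smul_eq_mul]

lemma jointP_prob (p : Ω → ℝ) (hp : ∀ ω, 0 ≤ p ω) (hpsum : ∑ ω : Ω, p ω = 1)
    {X : Type} [MeasurableSpace X] (μ : Ω → Measure X) (hμ : ∀ ω, IsProbabilityMeasure (μ ω)) :
    IsProbabilityMeasure (jointP p μ) := by
  constructor
  rw [jointP_apply p μ MeasurableSet.univ]
  simp only [Set.preimage_univ]
  have : ∀ ω : Ω, μ ω Set.univ = 1 := fun ω => (hμ ω).measure_univ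
  simp only [this, mul_one]
  rw [← ENNReal.ofReal_sum_of_nonneg (fun ω _ => hp ω), hpsum, ENNReal.ofReal_one]

lemma belief_nonneg (x : Belief Ω) (ω : Ω) : 0 ≤ x.1 ω := x.2.1 ω

lemma belief_le_one (x : Belief Ω) (ω : Ω) : x.1 ω ≤ 1 := by
  have := x.2.2
  calc x.1 ω ≤ ∑ i, x.1 i := Finset.single_le_sum (fun i _ => x.2.1 i) (Finset.mem_univ ω)
  _ = 1 := x.2.2

lemma setLIntegral_eval_le (lam : Measure (Belief Ω)) (ω' : Ω) (B : Set (Belief Ω)) :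
    ∫⁻ x in B, ENNReal.ofReal (x.1 ω') ∂lam ≤ lam B := by
  calc ∫⁻ x in B, ENNReal.ofReal (x.1 ω') ∂lam ≤ ∫⁻ _ in B, 1 ∂lam :=
        lintegral_mono fun x => ENNReal.ofReal_le_one.2 (belief_le_one x ω')
  _ = lam B := by simp

/-- market-clearing / consistency identity -/
def MC (p : Ω → ℝ) (lam : Ω → Measure (Belief Ω)) : Prop :=
  ∀ (ω' : Ω) (B : Set (Belief Ω)), MeasurableSet B →
    ENNReal.ofReal (p ω') * lam ω' B
      = ∑ ω : Ω, ENNReal.ofReal (p ω) * ∫⁻ x in B, ENNReal.ofReal (x.1 ω') ∂(lam ω)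

lemma setIntegral_g (p : Ω → ℝ) (lam : Ω → Measure (Belief Ω)) [∀ ω, SFinite (lam ω)]
    (ω' : Ω) {B : Set (Belief Ω)} (hB : MeasurableSet B) :
    ∫ z in Prod.snd ⁻¹' B, (z.2).1 ω' ∂(jointP p lam)
      = (∑ ω : Ω, ENNReal.ofReal (p ω) * ∫⁻ x in B, ENNReal.ofReal (x.1 ω') ∂(lam ω)).toReal := by
  have hgm : Measurable fun z : Ω × Belief Ω => (z.2).1 ω' := (meas_eval ω').comp measurable_snd
  rw [integral_eq_lintegral_of_nonneg_ae (μ := (jointP p lam).restrict (Prod.snd ⁻¹' B))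
      (f := fun z : Ω × Belief Ω => (z.2).1 ω')
      (ae_of_all _ fun z => belief_nonneg z.2 ω') hgm.aestronglyMeasurable]
  congr 1
  have hs : MeasurableSet (Prod.snd ⁻¹' B : Set (Ω × Belief Ω)) := measurable_snd hB
  rw [← lintegral_indicator hs (fun z : Ω × Belief Ω => ENNReal.ofReal ((z.2).1 ω')),
    lintegral_jointP p lam (hh := (hgm.ennreal_ofReal).indicator hs)]
  refine Finset.sum_congr rfl fun ω _ => ?_
  congr 1
  rw [← lintegral_indicator hB (fun x : Belief Ω => ENNReal.ofReal (x.1 ω'))]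
  refine lintegral_congr fun x => ?_
  by_cases hx : x ∈ B
  · rw [Set.indicator_of_mem hx, Set.indicator_of_mem (by exact hx)]
  · rw [Set.indicator_of_notMem hx, Set.indicator_of_notMem (by exact hx)]

lemma setIntegral_f (p : Ω → ℝ) (lam : Ω → Measure (Belief Ω)) [∀ ω, SFinite (lam ω)]
    (ω' : Ω) {B : Set (Belief Ω)} (hB : MeasurableSet B) :
    ∫ z in Prod.snd ⁻¹' B,
        Set.indicator {z : Ω × Belief Ω | z.1 = ω'} (fun _ => (1:ℝ)) z ∂(jointP p lam)
      = (ENNReal.ofReal (p ω') * lam ω' B).toReal := by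
  have ht : MeasurableSet {z : Ω × Belief Ω | z.1 = ω'} :=
    measurable_fst (measurableSet_singleton ω')
  rw [setIntegral_indicator ht, setIntegral_const, smul_eq_mul, mul_one]
  congr 1
  rw [measureReal_def, jointP_apply p lam ((measurable_snd hB).inter ht)]
  rw [Finset.sum_eq_single ω']
  · congr 1
    have : Prod.mk ω' ⁻¹' (Prod.snd ⁻¹' B ∩ {z : Ω × Belief Ω | z.1 = ω'}) = B := by
      ext x; simp
    rw [this]
  · intro ω _ hω
    have : (Prod.mk ω ⁻¹' (Prod.snd ⁻¹' B ∩ {z : Ω × Belief Ω | z.1 = ω'})) = ∅ := by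
      ext x; simp [hω]
    simp [this]
  · intro h; exact absurd (Finset.mem_univ ω') h

lemma feasible1_iff_MC (p : Ω → ℝ) (hp : ∀ ω, 0 ≤ p ω) (hpsum : ∑ ω : Ω, p ω = 1)
    (lam : Ω → Measure (Belief Ω)) (hlam : ∀ ω, IsProbabilityMeasure (lam ω)) :
    Feasible1 p lam ↔ MC p lam := by
  haveI : ∀ ω, SFinite (lam ω) := fun ω => have := hlam ω; inferInstance
  haveI hP : IsProbabilityMeasure (jointP p lam) := jointP_prob p hp hpsum lam hlam
  have hm : MeasurableSpace.comap (fun z : Ω × Belief Ω => z.2) inferInstance ≤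
      (inferInstance : MeasurableSpace (Ω × Belief Ω)) := measurable_snd.comap_le
  have hfin1 : ∀ (ω' : Ω) (B : Set (Belief Ω)), ENNReal.ofReal (p ω') * lam ω' B ≠ ⊤ :=
    fun ω' B => ENNReal.mul_ne_top ENNReal.ofReal_ne_top (measure_ne_top _ _)
  have hfin2 : ∀ (ω' : Ω) (B : Set (Belief Ω)),
      (∑ ω : Ω, ENNReal.ofReal (p ω) * ∫⁻ x in B, ENNReal.ofReal (x.1 ω') ∂(lam ω)) ≠ ⊤ := by
    intro ω' B
    refine (ENNReal.sum_lt_top.2 fun ω _ => ?_).ne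
    exact ENNReal.mul_lt_top ENNReal.ofReal_lt_top
      (lt_of_le_of_lt (setLIntegral_eval_le _ _ _) (measure_lt_top _ _))
  have hindmeas : ∀ ω' : Ω, MeasurableSet {z : Ω × Belief Ω | z.1 = ω'} :=
    fun ω' => measurable_fst (measurableSet_singleton ω')
  have hf : ∀ ω' : Ω, Integrable
      (Set.indicator {z : Ω × Belief Ω | z.1 = ω'} (fun _ => (1:ℝ))) (jointP p lam) :=
    fun ω' => (integrable_const (1:ℝ)).indicator (hindmeas ω')
  constructor
  · rintro ⟨-, hcond⟩ ω' B hB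
    have hsm : MeasurableSet[MeasurableSpace.comap (fun z : Ω × Belief Ω => z.2) inferInstance]
        (Prod.snd ⁻¹' B) := ⟨B, hB, rfl⟩
    have h1 : ∫ z in Prod.snd ⁻¹' B, (z.2).1 ω' ∂(jointP p lam)
        = ∫ z in Prod.snd ⁻¹' B,
            Set.indicator {z : Ω × Belief Ω | z.1 = ω'} (fun _ => (1:ℝ)) z ∂(jointP p lam) := by
      rw [integral_congr_ae (ae_restrict_of_ae (hcond ω'))]
      exact setIntegral_condExp hm (hf ω') hsm
    rw [setIntegral_g p lam ω' hB, setIntegral_f p lam ω' hB] at h1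
    exact (ENNReal.toReal_eq_toReal_iff' (hfin1 ω' B) (hfin2 ω' B)).1 h1.symm
  · intro hmc
    refine ⟨hlam, fun ω' => ?_⟩
    have hgm_comap : Measurable[MeasurableSpace.comap (fun z : Ω × Belief Ω => z.2) inferInstance]
        (fun z : Ω × Belief Ω => (z.2).1 ω') :=
      fun t ht => ⟨(fun x : Belief Ω => x.1 ω') ⁻¹' t, meas_eval ω' ht, rfl⟩
    refine ae_eq_condExp_of_forall_setIntegral_eq hm (hf ω') (fun s hs _ => ?_)
        (fun s hs _ => ?_) (StronglyMeasurable.aestronglyMeasurable hgm_comap.stronglyMeasurable)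
    · refine (Integrable.integrableOn ?_)
      refine ⟨((meas_eval ω').comp measurable_snd).aestronglyMeasurable,
        HasFiniteIntegral.of_bounded (C := 1) (ae_of_all _ fun z => ?_)⟩
      rw [Real.norm_eq_abs, abs_of_nonneg (belief_nonneg _ _)]
      exact belief_le_one _ _
    · obtain ⟨B, hB, rfl⟩ := hs
      rw [setIntegral_g p lam ω' hB, setIntegral_f p lam ω' hB, hmc ω' B hB]

lemma meas_f (ω ω₀ : Ω) :
    Measurable fun x : Belief Ω => ENNReal.ofReal (x.1 ω) / ENNReal.ofReal (x.1 ω₀) :=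
  ((meas_eval ω).ennreal_ofReal).div ((meas_eval ω₀).ennreal_ofReal)

lemma MC_implies_ineq (p : Ω → ℝ) (hp : ∀ ω, 0 < p ω)
    (lam : Ω → Measure (Belief Ω)) (hlam : ∀ ω, IsProbabilityMeasure (lam ω))
    (hmc : MC p lam) (ω₀ : Ω) :
    ∀ ω : Ω, ω ≠ ω₀ →
      ∫⁻ x : Belief Ω, ENNReal.ofReal (x.1 ω) / ENNReal.ofReal (x.1 ω₀) ∂(lam ω₀)
        ≤ ENNReal.ofReal (p ω / p ω₀) := by
  intro ω hω
  haveI : ∀ ω, SFinite (lam ω) := fun ω => have := hlam ω; inferInstance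
  set ν : Measure (Belief Ω) := ∑ ω'' : Ω, ENNReal.ofReal (p ω'') • lam ω'' with hν
  have hνint : ∀ (g : Belief Ω → ℝ≥0∞), Measurable g → ∀ B : Set (Belief Ω), MeasurableSet B →
      ∫⁻ x in B, g x ∂ν = ∑ ω'' : Ω, ENNReal.ofReal (p ω'') * ∫⁻ x in B, g x ∂(lam ω'') := by
    intro g hg B hB
    rw [← lintegral_indicator hB g, hν, lintegral_finset_sum_measure]
    refine Finset.sum_congr rfl fun ω'' _ => ?_
    rw [lintegral_smul_measure, smul_eq_mul, ← lintegral_indicator hB g]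
  have key : ENNReal.ofReal (p ω₀) • lam ω₀
      = ν.withDensity (fun x => ENNReal.ofReal (x.1 ω₀)) := by
    refine Measure.ext fun B hB => ?_
    rw [Measure.smul_apply, smul_eq_mul, withDensity_apply _ hB,
      hνint _ ((meas_eval ω₀).ennreal_ofReal) B hB]
    exact hmc ω₀ B hB
  have step1 : ENNReal.ofReal (p ω₀)
        * ∫⁻ x, ENNReal.ofReal (x.1 ω) / ENNReal.ofReal (x.1 ω₀) ∂(lam ω₀)
      ≤ ENNReal.ofReal (p ω) := by
    rw [← smul_eq_mul, ← lintegral_smul_measure, key,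
      lintegral_withDensity_eq_lintegral_mul ν ((meas_eval ω₀).ennreal_ofReal) (meas_f ω ω₀)]
    calc ∫⁻ x, ((fun x : Belief Ω => ENNReal.ofReal (x.1 ω₀))
            * (fun x : Belief Ω => ENNReal.ofReal (x.1 ω) / ENNReal.ofReal (x.1 ω₀))) x ∂ν
        ≤ ∫⁻ x, ENNReal.ofReal (x.1 ω) ∂ν := lintegral_mono fun x => ENNReal.mul_div_le
      _ = ENNReal.ofReal (p ω) := by
          rw [← setLIntegral_univ, hνint _ ((meas_eval ω).ennreal_ofReal) _ MeasurableSet.univ]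
          have h2 := hmc ω Set.univ MeasurableSet.univ
          rw [(hlam ω).measure_univ, mul_one] at h2
          exact h2.symm
  rw [ENNReal.ofReal_div_of_pos (hp ω₀), ENNReal.le_div_iff_mul_le
      (Or.inl (by simp [ENNReal.ofReal_eq_zero, not_le.2 (hp ω₀)]))
      (Or.inl ENNReal.ofReal_ne_top)]
  rw [mul_comm] at step1
  exact step1

open Classical in
noncomputable def vtx (ω : Ω) : Belief Ω :=
  ⟨fun ω' => if ω' = ω then 1 else 0,
   fun i => by dsimp only; split <;> norm_num,
   by simp⟩

open Classical in
lemma vtx_apply (ω ω' : Ω) : (vtx ω).1 ω' = if ω' = ω then 1 else 0 := by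
  simp [vtx]

lemma ae_pos (ω₀ : Ω) (lam0 : Measure (Belief Ω)) (p₀ : Ω → ℝ)
    (hI : ∀ ω : Ω, ω ≠ ω₀ →
      ∫⁻ x : Belief Ω, ENNReal.ofReal (x.1 ω) / ENNReal.ofReal (x.1 ω₀) ∂lam0
        ≤ ENNReal.ofReal (p₀ ω)) :
    ∀ᵐ x ∂lam0, 0 < x.1 ω₀ := by
  have h1 : ∀ᵐ x ∂lam0, ∀ ω : Ω, ω ≠ ω₀ →
      ENNReal.ofReal (x.1 ω) / ENNReal.ofReal (x.1 ω₀) < ⊤ := by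
    rw [ae_all_iff]
    intro ω
    by_cases hω : ω = ω₀
    · exact ae_of_all _ fun x h => absurd hω h
    · have := ae_lt_top (meas_f ω ω₀) (lt_of_le_of_lt (hI ω hω) ENNReal.ofReal_lt_top).ne
      filter_upwards [this] with x hx _
      exact hx
  filter_upwards [h1] with x hx
  by_contra hle
  push_neg at hle
  have hx0 : x.1 ω₀ = 0 := le_antisymm hle (belief_nonneg x ω₀)
  have hex : ∃ ω : Ω, x.1 ω ≠ 0 := by
    by_contra hall
    push_neg at hall
    have := x.2.2
    simp only [hall] at this
    simp at this
  obtain ⟨ω, hωx⟩ := hex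
  have hωne : ω ≠ ω₀ := fun h => hωx (h ▸ hx0)
  have htop : ENNReal.ofReal (x.1 ω) / ENNReal.ofReal (x.1 ω₀) = ⊤ := by
    rw [hx0, ENNReal.ofReal_zero]
    exact ENNReal.div_zero (by
      simpa [ENNReal.ofReal_eq_zero, not_le] using
        lt_of_le_of_ne (belief_nonneg x ω) (Ne.symm hωx))
  exact (lt_irrefl _ (htop ▸ hx ω hωne)).elim

lemma construct_MC (p : Ω → ℝ) (hp : ∀ ω, 0 < p ω) (ω₀ : Ω)
    (lam0 : Measure (Belief Ω)) (hprob : IsProbabilityMeasure lam0)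
    (hI : ∀ ω : Ω, ω ≠ ω₀ →
      ∫⁻ x : Belief Ω, ENNReal.ofReal (x.1 ω) / ENNReal.ofReal (x.1 ω₀) ∂lam0
        ≤ ENNReal.ofReal (p ω / p ω₀)) :
    ∃ lam : Ω → Measure (Belief Ω),
      (∀ ω, IsProbabilityMeasure (lam ω)) ∧ MC p lam ∧ lam ω₀ = lam0 := by
  classical
  set F : Ω → Belief Ω → ℝ≥0∞ :=
    fun ω x => ENNReal.ofReal (x.1 ω) / ENNReal.ofReal (x.1 ω₀) with hFdef
  have hFmeas : ∀ ω, Measurable (F ω) := fun ω => meas_f ω ω₀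
  have hpos : ∀ᵐ x ∂lam0, 0 < x.1 ω₀ := ae_pos ω₀ lam0 (fun ω => p ω / p ω₀) hI
  set I : Ω → ℝ≥0∞ := fun ω => ∫⁻ x, F ω x ∂lam0 with hIdef
  set r : Ω → ℝ≥0∞ := fun ω => ENNReal.ofReal (p ω₀ / p ω) with hrdef
  set c : Ω → ℝ≥0∞ := fun ω => 1 - r ω * I ω with hcdef
  have hrI : ∀ ω : Ω, ω ≠ ω₀ → r ω * I ω ≤ 1 := by
    intro ω hω
    calc r ω * I ω ≤ ENNReal.ofReal (p ω₀ / p ω) * ENNReal.ofReal (p ω / p ω₀) :=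
          mul_le_mul_right (hI ω hω) _
    _ = ENNReal.ofReal ((p ω₀ / p ω) * (p ω / p ω₀)) :=
          (ENNReal.ofReal_mul (le_of_lt (div_pos (hp ω₀) (hp ω)))).symm
    _ = 1 := by
          rw [show (p ω₀ / p ω) * (p ω / p ω₀) = 1 by
            rw [div_mul_div_comm, mul_comm (p ω₀) (p ω)]
            exact div_self (mul_pos (hp ω) (hp ω₀)).ne']
          exact ENNReal.ofReal_one
  have hc : ∀ ω : Ω, ω ≠ ω₀ → r ω * I ω + c ω = 1 :=
    fun ω hω => add_tsub_cancel_of_le (hrI ω hω)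
  set lam : Ω → Measure (Belief Ω) := fun ω =>
    if ω = ω₀ then lam0
    else r ω • lam0.withDensity (F ω) + c ω • Measure.dirac (vtx ω) with hlamdef
  have hlam0 : lam ω₀ = lam0 := if_pos rfl
  have hlamne : ∀ ω : Ω, ω ≠ ω₀ →
      lam ω = r ω • lam0.withDensity (F ω) + c ω • Measure.dirac (vtx ω) :=
    fun ω hω => if_neg hω
  have hwd_apply : ∀ (ω : Ω) {B : Set (Belief Ω)}, MeasurableSet B →
      lam0.withDensity (F ω) B = ∫⁻ x in B, F ω x ∂lam0 :=
    fun ω {B} hB => withDensity_apply _ hB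
  have hprob_all : ∀ ω, IsProbabilityMeasure (lam ω) := by
    intro ω
    by_cases hω : ω = ω₀
    · rw [hω, hlam0]; exact hprob
    · constructor
      rw [hlamne ω hω]
      rw [Measure.add_apply, Measure.smul_apply, Measure.smul_apply,
        hwd_apply ω MeasurableSet.univ, setLIntegral_univ, Measure.dirac_apply_of_mem
          (Set.mem_univ _), smul_eq_mul, smul_eq_mul, mul_one]
      exact hc ω hω
  refine ⟨lam, hprob_all, ?_, hlam0⟩
  intro ω' B hB
  -- dirac set-integral values
  have hdirac : ∀ ω : Ω, ∫⁻ x in B, ENNReal.ofReal (x.1 ω') ∂(Measure.dirac (vtx ω))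
      = if vtx ω ∈ B then ENNReal.ofReal ((vtx ω).1 ω') else 0 :=
    fun ω => setLIntegral_dirac' ((meas_eval ω').ennreal_ofReal) hB
  -- per-term computation for ω ≠ ω₀
  have hterm : ∀ ω : Ω, ω ≠ ω₀ →
      ENNReal.ofReal (p ω) * ∫⁻ x in B, ENNReal.ofReal (x.1 ω') ∂(lam ω)
        = ENNReal.ofReal (p ω₀) * ∫⁻ x in B, F ω x * ENNReal.ofReal (x.1 ω') ∂lam0
          + ENNReal.ofReal (p ω) * c ω *
              (if vtx ω ∈ B then ENNReal.ofReal ((vtx ω).1 ω') else 0) := by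
    intro ω hω
    rw [hlamne ω hω, Measure.restrict_add, lintegral_add_measure,
      Measure.restrict_smul, Measure.restrict_smul, lintegral_smul_measure,
      lintegral_smul_measure, smul_eq_mul, smul_eq_mul, restrict_withDensity hB,
      lintegral_withDensity_eq_lintegral_mul _ (hFmeas ω) ((meas_eval ω').ennreal_ofReal),
      hdirac ω, mul_add]
    congr 1
    · rw [← mul_assoc]
      congr 1
      rw [hrdef]
      simp only
      rw [← ENNReal.ofReal_mul (le_of_lt (hp ω)),
        show p ω * (p ω₀ / p ω) = p ω₀ by
          rw [mul_comm]; exact div_mul_cancel₀ _ (hp ω).ne']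
    · exact (mul_assoc _ _ _).symm
  -- the bracket identity
  have hbracket : ∀ ωq : Ω,
      (∫⁻ x in B, ENNReal.ofReal (x.1 ωq) ∂lam0)
        + ∑ ω ∈ Finset.univ \ {ω₀}, ∫⁻ x in B, F ω x * ENNReal.ofReal (x.1 ωq) ∂lam0
      = ∫⁻ x in B, F ωq x ∂lam0 := by
    intro ωq
    rw [← lintegral_finset_sum (f := fun ω x => F ω x * ENNReal.ofReal (x.1 ωq)) _ (fun ω _ =>
        ((hFmeas ω).mul ((meas_eval ωq).ennreal_ofReal))),
      ← lintegral_add_left ((meas_eval ωq).ennreal_ofReal)]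
    refine lintegral_congr_ae (ae_restrict_of_ae ?_)
    filter_upwards [hpos] with x hx
    set b : ℝ≥0∞ := ENNReal.ofReal (x.1 ω₀) with hbdef
    have hb0 : b ≠ 0 := by simp [hbdef, ENNReal.ofReal_eq_zero, not_le, hx]
    have hbt : b ≠ ⊤ := ENNReal.ofReal_ne_top
    have hsum : ∑ ω ∈ Finset.univ \ {ω₀}, ENNReal.ofReal (x.1 ω)
        = ENNReal.ofReal (1 - x.1 ω₀) := by
      rw [← ENNReal.ofReal_sum_of_nonneg (fun i _ => x.2.1 i)]
      congr 1
      have hsx := x.2.2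
      have := Finset.sum_eq_sum_sdiff_singleton_add (Finset.mem_univ ω₀) x.1
      rw [this] at hsx
      linarith
    have hone : b + ENNReal.ofReal (1 - x.1 ω₀) = 1 := by
      rw [hbdef, ← ENNReal.ofReal_add (belief_nonneg x ω₀) (by
        have := belief_le_one x ω₀; linarith)]
      norm_num
    have hF' : ∀ ω : Ω, F ω x * ENNReal.ofReal (x.1 ωq)
        = ENNReal.ofReal (x.1 ω) * (b⁻¹ * ENNReal.ofReal (x.1 ωq)) := by
      intro ω
      simp only [hFdef, div_eq_mul_inv]
      rw [hbdef, mul_assoc]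
    calc ENNReal.ofReal (x.1 ωq)
          + ∑ ω ∈ Finset.univ \ {ω₀}, F ω x * ENNReal.ofReal (x.1 ωq)
        = ENNReal.ofReal (x.1 ωq)
          + (∑ ω ∈ Finset.univ \ {ω₀}, ENNReal.ofReal (x.1 ω))
              * (b⁻¹ * ENNReal.ofReal (x.1 ωq)) := by
          rw [Finset.sum_congr rfl (fun ω _ => hF' ω), ← Finset.sum_mul]
      _ = b * (b⁻¹ * ENNReal.ofReal (x.1 ωq))
          + ENNReal.ofReal (1 - x.1 ω₀) * (b⁻¹ * ENNReal.ofReal (x.1 ωq)) := by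
          rw [hsum]
          congr 1
          rw [← mul_assoc, ENNReal.mul_inv_cancel hb0 hbt, one_mul]
      _ = (b + ENNReal.ofReal (1 - x.1 ω₀)) * (b⁻¹ * ENNReal.ofReal (x.1 ωq)) :=
          (add_mul _ _ _).symm
      _ = b⁻¹ * ENNReal.ofReal (x.1 ωq) := by rw [hone, one_mul]
      _ = F ωq x := by
          simp only [hFdef, div_eq_mul_inv]
          rw [hbdef]
          exact mul_comm _ _
  -- split the sum
  rw [Finset.sum_eq_sum_sdiff_singleton_add (Finset.mem_univ ω₀)
    (fun ω => ENNReal.ofReal (p ω) * ∫⁻ x in B, ENNReal.ofReal (x.1 ω') ∂(lam ω))]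
  rw [Finset.sum_congr rfl (fun ω hω => hterm ω (by
    simpa using (Finset.mem_sdiff.1 hω).2))]
  rw [Finset.sum_add_distrib, ← Finset.mul_sum, hlam0]
  -- now RHS = ofReal(pω₀) * ∑_{ω≠ω₀} ∫ Fω·gω' + (dirac terms) + ofReal(pω₀) * ∫_B gω'
  have hRHS : ENNReal.ofReal (p ω₀)
        * ∑ ω ∈ Finset.univ \ {ω₀}, ∫⁻ x in B, F ω x * ENNReal.ofReal (x.1 ω') ∂lam0
      + (∑ ω ∈ Finset.univ \ {ω₀}, ENNReal.ofReal (p ω) * c ω *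
          (if vtx ω ∈ B then ENNReal.ofReal ((vtx ω).1 ω') else 0))
      + ENNReal.ofReal (p ω₀) * ∫⁻ x in B, ENNReal.ofReal (x.1 ω') ∂lam0
      = ENNReal.ofReal (p ω₀) * ∫⁻ x in B, F ω' x ∂lam0
        + (∑ ω ∈ Finset.univ \ {ω₀}, ENNReal.ofReal (p ω) * c ω *
            (if vtx ω ∈ B then ENNReal.ofReal ((vtx ω).1 ω') else 0)) := by
    rw [← hbracket ω', mul_add]
    ring
  rw [hRHS]
  -- dirac sum simplification
  have hdsum : (∑ ω ∈ Finset.univ \ {ω₀}, ENNReal.ofReal (p ω) * c ω *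
        (if vtx ω ∈ B then ENNReal.ofReal ((vtx ω).1 ω') else 0))
      = if ω' = ω₀ then 0 else
          ENNReal.ofReal (p ω') * c ω' * (if vtx ω' ∈ B then 1 else 0) := by
    by_cases hω' : ω' = ω₀
    · rw [if_pos hω']
      refine Finset.sum_eq_zero fun ω hω => ?_
      have hωne : ω ≠ ω₀ := by simpa using (Finset.mem_sdiff.1 hω).2
      have : (vtx ω).1 ω' = 0 := by
        rw [vtx_apply, if_neg (fun h => hωne (by rw [← h, hω']))]
      rw [this]
      simp
    · rw [if_neg hω']
      rw [Finset.sum_eq_single ω']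
      · have : (vtx ω').1 ω' = 1 := by rw [vtx_apply, if_pos rfl]
        rw [this, ENNReal.ofReal_one]
      · intro ω hω hne
        have : (vtx ω).1 ω' = 0 := by rw [vtx_apply, if_neg (fun h => hne (by rw [h]))]
        rw [this]
        simp
      · intro h
        exact absurd (Finset.mem_sdiff.2 ⟨Finset.mem_univ ω', by simpa using hω'⟩) h
  rw [hdsum]
  -- finally compute LHS
  by_cases hω' : ω' = ω₀
  · rw [hω', if_pos rfl, add_zero, hlam0]
    congr 1
    have h1 : ∫⁻ x in B, F ω₀ x ∂lam0 = ∫⁻ x in B, (1 : ℝ≥0∞) ∂lam0 := by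
      refine lintegral_congr_ae (ae_restrict_of_ae ?_)
      filter_upwards [hpos] with x hx
      rw [hFdef]
      simp only
      exact ENNReal.div_self (ENNReal.ofReal_pos.2 hx).ne' ENNReal.ofReal_ne_top
    rw [h1, setLIntegral_one]
  · rw [if_neg hω', hlamne ω' hω', Measure.add_apply, Measure.smul_apply,
      Measure.smul_apply, hwd_apply ω' hB, smul_eq_mul, smul_eq_mul, mul_add]
    congr 1
    · rw [← mul_assoc]
      congr 1
      rw [hrdef]
      simp only
      rw [← ENNReal.ofReal_mul (le_of_lt (hp ω')),
        show p ω' * (p ω₀ / p ω') = p ω₀ by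
          rw [mul_comm]; exact div_mul_cancel₀ _ (hp ω').ne']
    · rw [Measure.dirac_apply' _ hB, ← mul_assoc]
      congr 1

end Helpers

/-- characterization of feasible one-agent marginals at a given state
(Lemma `lm_projection_admissible`).  Division is in `ℝ≥0∞`, so `0/0 = 0` and
`a/0 = ∞` for `a > 0`. -/
theorem feasible_marginal_at_state_iff
    {Ω : Type} [Fintype Ω] [MeasurableSpace Ω] [MeasurableSingletonClass Ω]
    (hΩ : 2 ≤ Fintype.card Ω)
    (p : Ω → ℝ) (hp : ∀ ω, 0 < p ω) (hpsum : ∑ ω : Ω, p ω = 1)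
    (ω₀ : Ω) (lam0 : Measure (Belief Ω)) (hprob : IsProbabilityMeasure lam0) :
    (∃ lam : Ω → Measure (Belief Ω), Feasible1 p lam ∧ lam ω₀ = lam0) ↔
      (∀ ω : Ω, ω ≠ ω₀ →
        ∫⁻ x : Belief Ω, ENNReal.ofReal (x.1 ω) / ENNReal.ofReal (x.1 ω₀) ∂lam0
          ≤ ENNReal.ofReal (p ω / p ω₀)) := by
  constructor
  · rintro ⟨lam, hfeas, hl0⟩
    have hlam := hfeas.1
    have hmc := (feasible1_iff_MC p (fun ω => (hp ω).le) hpsum lam hlam).1 hfeas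
    intro ω hω
    have hfin := MC_implies_ineq p hp lam hlam hmc ω₀ ω hω
    rwa [hl0] at hfin
  · intro h
    obtain ⟨lam, hprob_all, hmc, hl0⟩ := construct_MC p hp ω₀ lam0 hprob h
    exact ⟨lam, (feasible1_iff_MC p (fun ω => (hp ω).le) hpsum lam hprob_all).2 hmc, hl0⟩
end

section
/- Let Ω be a finite set with |Ω| ≥ 2, p a full-support probability vector on Ω, n ≥ 1, and ω₀ ∈ Ω. Let 𝓕 denote the convex set of Borel probability measures π on Δ(Ω)^n whose i-th marginals π_i satisfy ∫ x(ω)/x(ω₀) dπ_i(x) ≤ p(ω)/p(ω₀) for every i ∈ {1,…,n} and every ω ≠ ω₀ (integrals in [0,∞] with conventions 0/0 = 0 and a/0 = ∞ for a > 0). Then every extreme point π of 𝓕 has finite support of cardinality at most n(π)+1, where n(π) is the number of pairs (i,ω) with ω ≠ ω₀ for which the corresponding inequality holds with equality; in particular every extreme point of 𝓕 is supported on at most n·(|Ω|−1)+1 points. -/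
open MeasureTheory

open scoped ENNReal

section AuxiliaryLemmas

lemma split_lemma {X : Type*} [MetricSpace X] [SecondCountableTopology X]
    [MeasurableSpace X] [OpensMeasurableSpace X]
    (ν : Measure X) [IsFiniteMeasure ν] (hatom : ∀ x : X, ν {x} = 0) (hν : ν ≠ 0) :
    ∃ U V : Set X, MeasurableSet U ∧ MeasurableSet V ∧ Disjoint U V ∧
      0 < ν U ∧ 0 < ν V := by
  obtain ⟨b, bc, -, hb⟩ := TopologicalSpace.exists_countable_basis X
  set Z : Set X := ⋃₀ {u ∈ b | ν u = 0} with hZdef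
  have hZopen : IsOpen Z :=
    isOpen_sUnion fun u hu => hb.isOpen hu.1
  have hZ0 : ν Z = 0 :=
    (measure_sUnion_null_iff (bc.mono (Set.sep_subset _ _))).2 (fun u hu => hu.2)
  have huniv : 0 < ν Set.univ := by
    rcases eq_zero_or_pos (ν Set.univ) with h | h
    · exact absurd (Measure.measure_univ_eq_zero.mp h) hν
    · exact h
  have hZc : 0 < ν Zᶜ := by
    rw [measure_compl hZopen.measurableSet (measure_ne_top ν Z), hZ0, tsub_zero]
    exact huniv
  obtain ⟨x, hx⟩ := nonempty_of_measure_ne_zero hZc.ne'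
  have hxZ : x ∉ Z := hx
  have hopen_pos : ∀ U : Set X, IsOpen U → x ∈ U → 0 < ν U := by
    intro U hU hxU
    rcases eq_zero_or_pos (ν U) with h | h
    · exfalso
      obtain ⟨u, hub, hxu, huU⟩ := hb.exists_subset_of_mem_open hxU hU
      exact hxZ ⟨u, ⟨hub, le_antisymm (h ▸ measure_mono huU) zero_le⟩, hxu⟩
    · exact h
  set C : ℕ → Set X := fun k => Metric.closedBall x (1 / (k + 1)) with hCdef
  have hCmeas : ∀ k, MeasurableSet (C k) := fun k => Metric.isClosed_closedBall.measurableSet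
  have hCanti : Antitone C := by
    intro k m hkm
    apply Metric.closedBall_subset_closedBall
    apply one_div_le_one_div_of_le (by positivity)
    exact_mod_cast by omega
  have hCinter : ⋂ k, C k = {x} := by
    ext y
    simp only [Set.mem_iInter, hCdef, Metric.mem_closedBall, Set.mem_singleton_iff]
    constructor
    · intro h
      by_contra hne
      have hd : 0 < dist y x := dist_pos.2 hne
      obtain ⟨k, hk⟩ := exists_nat_one_div_lt hd
      exact absurd (h k) (by linarith [hk])
    · intro h k
      simp [h]
      positivity
  have htend : Filter.Tendsto (ν ∘ C) Filter.atTop (nhds 0) := by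
    have := tendsto_measure_iInter_atTop (μ := ν)
      (fun k => (hCmeas k).nullMeasurableSet) hCanti ⟨0, measure_ne_top ν _⟩
    rwa [hCinter, hatom x] at this
  have : ∀ᶠ k in Filter.atTop, ν (C k) < ν Set.univ :=
    htend.eventually_lt_const huniv
  obtain ⟨k, hk⟩ := this.exists
  refine ⟨Metric.ball x (1 / (k + 1)), (C k)ᶜ, Metric.isOpen_ball.measurableSet,
    (hCmeas k).compl, disjoint_compl_right.mono_left Metric.ball_subset_closedBall, ?_, ?_⟩
  · exact hopen_pos _ Metric.isOpen_ball (Metric.mem_ball_self (by positivity))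
  · rw [measure_compl (hCmeas k) (measure_ne_top ν _)]
    exact tsub_pos_iff_lt.2 hk

lemma many_sets {X : Type*} [MetricSpace X] [SecondCountableTopology X]
    [MeasurableSpace X] [OpensMeasurableSpace X]
    (ν : Measure X) [IsFiniteMeasure ν] (hatom : ∀ x : X, ν {x} = 0) :
    ∀ (k : ℕ) (S : Set X), MeasurableSet S → 0 < ν S →
    ∃ A : Fin k → Set X, (∀ j, MeasurableSet (A j)) ∧
      Pairwise (Function.onFun Disjoint A) ∧ (∀ j, A j ⊆ S) ∧ ∀ j, 0 < ν (A j) := by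
  intro k
  induction k with
  | zero =>
    exact fun S _ _ => ⟨fun j => j.elim0, fun j => j.elim0, fun j => j.elim0,
      fun j => j.elim0, fun j => j.elim0⟩
  | succ k ih =>
    intro S hS hpos
    have hres : ∀ x : X, (ν.restrict S) {x} = 0 := by
      intro x
      rw [Measure.restrict_apply (measurableSet_singleton x)]
      exact measure_mono_null Set.inter_subset_left (hatom x)
    have hresne : ν.restrict S ≠ 0 := by
      intro h
      have : (ν.restrict S) Set.univ = 0 := by rw [h]; rfl
      rw [Measure.restrict_apply_univ] at this
      exact hpos.ne' this
    obtain ⟨U, V, hU, hV, hUV, hUp, hVp⟩ := split_lemma (ν.restrict S) hres hresne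
    rw [Measure.restrict_apply hU] at hUp
    rw [Measure.restrict_apply hV] at hVp
    obtain ⟨A', hA'm, hA'd, hA'sub, hA'pos⟩ := ih (V ∩ S) (hV.inter hS) hVp
    refine ⟨Fin.cons (U ∩ S) A', ?_, ?_, ?_, ?_⟩
    · intro j
      refine Fin.cases ?_ ?_ j
      · exact hU.inter hS
      · exact fun i => hA'm i
    · intro j j' hne
      induction j using Fin.cases with
      | zero =>
        induction j' using Fin.cases with
        | zero => exact absurd rfl hne
        | succ i' =>
          simp only [Function.onFun, Fin.cons_zero, Fin.cons_succ]
          exact hUV.mono Set.inter_subset_left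
            ((hA'sub i').trans Set.inter_subset_left)
      | succ i =>
        induction j' using Fin.cases with
        | zero =>
          simp only [Function.onFun, Fin.cons_zero, Fin.cons_succ]
          exact (hUV.mono Set.inter_subset_left
            ((hA'sub i).trans Set.inter_subset_left)).symm
        | succ i' =>
          simp only [Function.onFun, Fin.cons_succ]
          exact hA'd (fun h => hne (by rw [h]))
    · intro j
      refine Fin.cases ?_ ?_ j
      · exact Set.inter_subset_right
      · exact fun i => (hA'sub i).trans Set.inter_subset_right
    · intro j
      refine Fin.cases ?_ ?_ j
      · exact hUp
      · exact fun i => hA'pos i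

lemma finite_support {X : Type*} [MetricSpace X] [SecondCountableTopology X]
    [MeasurableSpace X] [OpensMeasurableSpace X] [MeasurableSingletonClass X]
    (π : Measure X) [IsFiniteMeasure π] (N : ℕ)
    (hno : ∀ A : Fin (N + 1) → Set X, (∀ j, MeasurableSet (A j)) →
      Pairwise (Function.onFun Disjoint A) → ¬ (∀ j, 0 < π (A j))) :
    ∃ s : Finset X, π (↑s)ᶜ = 0 ∧ s.card ≤ N := by
  classical
  set s₀ : Set X := {x | π {x} ≠ 0} with hs₀
  have hcard : ∀ t : Finset X, ↑t ⊆ s₀ → t.card ≤ N := by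
    intro t ht
    by_contra hgt
    push_neg at hgt
    obtain ⟨t', ht't, ht'c⟩ := Finset.exists_subset_card_eq hgt
    have e := (Finset.equivFinOfCardEq ht'c).symm
    refine hno (fun j => {(e j : X)}) (fun j => measurableSet_singleton _) ?_ ?_
    · intro j j' hne
      simp only [Function.onFun, Set.disjoint_singleton_left, Set.mem_singleton_iff]
      intro h
      exact hne (e.injective (Subtype.ext h))
    · intro j
      have : (e j : X) ∈ s₀ := ht (ht't (e j).2)
      exact pos_iff_ne_zero.2 this
  have hfin : s₀.Finite := by
    by_contra hinf
    obtain ⟨t, hts, htc⟩ := (Set.Infinite.exists_subset_card_eq (Set.not_infinite.not_right.mpr hinf) (N + 1))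
    have := hcard t hts
    omega
  refine ⟨hfin.toFinset, ?_, hcard _ (by simp)⟩
  by_contra h
  set ν := π.restrict (↑hfin.toFinset : Set X)ᶜ with hν
  have hatom : ∀ x : X, ν {x} = 0 := by
    intro x
    rw [hν, Measure.restrict_apply (measurableSet_singleton x)]
    by_cases hx : π {x} = 0
    · exact measure_mono_null Set.inter_subset_left hx
    · have : x ∈ (↑hfin.toFinset : Set X) := by simp [hs₀, hx]
      rw [Set.singleton_inter_eq_empty.2 (by simpa using this)]
      exact measure_empty
  have hνpos : 0 < ν Set.univ := by
    rw [hν, Measure.restrict_apply_univ]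
    exact pos_iff_ne_zero.2 h
  obtain ⟨A, hAm, hAd, -, hApos⟩ := many_sets ν hatom (N + 1) Set.univ MeasurableSet.univ hνpos
  refine hno A hAm hAd (fun j => ?_)
  have : ν (A j) ≤ π (A j) := by
    rw [hν, Measure.restrict_apply (hAm j)]
    exact measure_mono Set.inter_subset_left
  exact lt_of_lt_of_le (hApos j) this

open scoped ENNReal in
lemma winkler {X : Type*} [MeasurableSpace X] (π : Measure X) [IsProbabilityMeasure π]
    {ι : Type*} [Fintype ι] (f : ι → X → ℝ≥0∞)
    (b : ι → ℝ≥0∞) (hb : ∀ i, b i ≠ ∞) (hle : ∀ i, ∫⁻ x, f i x ∂π ≤ b i)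
    (K : Finset ι) (hK : ∀ i ∉ K, ∫⁻ x, f i x ∂π ≠ b i)
    (hext : ∀ π' π'' : Measure X, IsProbabilityMeasure π' → IsProbabilityMeasure π'' →
      (∀ i, ∫⁻ x, f i x ∂π' ≤ b i) → (∀ i, ∫⁻ x, f i x ∂π'' ≤ b i) →
      π = ENNReal.ofReal (1/2) • π' + ENNReal.ofReal (1 - 1/2) • π'' → π' = π'')
    (A : Fin (K.card + 2) → Set X) (hA : ∀ j, MeasurableSet (A j))
    (hdis : Pairwise (Function.onFun Disjoint A)) (hpos : ∀ j, π (A j) ≠ 0) : False := by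
  classical
  set P : Fin (K.card + 2) → ℝ≥0∞ := fun j => π (A j) with hPdef
  set I : ι → Fin (K.card + 2) → ℝ≥0∞ := fun i j => ∫⁻ x in A j, f i x ∂π with hIdef
  set Ri : ι → ℝ≥0∞ := fun i => ∫⁻ x in (⋃ j, A j)ᶜ, f i x ∂π with hRidef
  have hfint : ∀ i, ∫⁻ x, f i x ∂π ≠ ∞ := fun i => ne_top_of_le_ne_top (hb i) (hle i)
  have hIfin : ∀ i j, I i j ≠ ∞ :=
    fun i j => ne_top_of_le_ne_top (hfint i) (setLIntegral_le_lintegral _ _)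
  have hRifin : ∀ i, Ri i ≠ ∞ :=
    fun i => ne_top_of_le_ne_top (hfint i) (setLIntegral_le_lintegral _ _)
  have hPfin : ∀ j, P j ≠ ∞ := fun j => measure_ne_top π _
  -- decomposition of π
  have hμdecomp : π = (∑ j, π.restrict (A j)) + π.restrict (⋃ j, A j)ᶜ := by
    have h1 : π.restrict (⋃ j, A j) = Measure.sum (fun j => π.restrict (A j)) :=
      Measure.restrict_iUnion hdis hA
    rw [Measure.sum_fintype] at h1
    rw [← h1, Measure.restrict_add_restrict_compl (MeasurableSet.iUnion hA)]
  have hdecomp : ∀ i, ∫⁻ x, f i x ∂π = (∑ j, I i j) + Ri i := by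
    intro i
    conv_lhs => rw [hμdecomp]
    rw [lintegral_add_measure, lintegral_finset_sum_measure]
  have hPdecomp : (∑ j, P j) + π (⋃ j, A j)ᶜ = 1 := by
    have := congrArg (fun μ : Measure X => μ Set.univ) hμdecomp
    simp only [measure_univ, Measure.add_apply, Measure.coe_finset_sum,
      Finset.sum_apply, Measure.restrict_apply_univ] at this
    exact this.symm
  -- linear dependence
  set v : Fin (K.card + 2) → ((↥K → ℝ) × ℝ) :=
    fun j => (fun k => (I (k : ι) j).toReal, (P j).toReal) with hvdef
  have hnli : ¬ LinearIndependent ℝ v := by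
    intro h
    have := h.fintype_card_le_finrank
    rw [Module.finrank_prod, Module.finrank_pi, Module.finrank_self] at this
    simp only [Fintype.card_coe, Fintype.card_fin] at this
    omega
  obtain ⟨c, hsum, j₀, hj₀⟩ := Fintype.not_linearIndependent_iff.mp hnli
  have hker1 : ∀ k : ↥K, ∑ j, c j * (I (k : ι) j).toReal = 0 := by
    intro k
    have := congrArg (fun z => z.1 k) hsum
    simpa [hvdef, Finset.sum_apply, Prod.fst_sum, smul_eq_mul] using this
  have hker2 : ∑ j, c j * (P j).toReal = 0 := by
    have := congrArg Prod.snd hsum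
    simpa [hvdef, Prod.snd_sum, smul_eq_mul] using this
  -- epsilon
  set M : ℝ := Finset.univ.sup' Finset.univ_nonempty (fun j => |c j|) with hMdef
  have hMle : ∀ j, |c j| ≤ M := fun j => Finset.le_sup' (fun j => |c j|) (Finset.mem_univ j)
  have hM0 : 0 ≤ M := le_trans (abs_nonneg (c j₀)) (hMle j₀)
  set ε₁ : ℝ := 1 / (2 * (M + 1)) with hε₁def
  have hε₁pos : 0 < ε₁ := by positivity
  set S : ι → ℝ := fun i => ∑ j, c j * (I i j).toReal with hSdef
  set δ : ι → ℝ := fun i => (b i).toReal - (∫⁻ x, f i x ∂π).toReal with hδdef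
  have hδpos : ∀ i ∉ K, 0 < δ i := by
    intro i hi
    have hlt : ∫⁻ x, f i x ∂π < b i := lt_of_le_of_ne (hle i) (hK i hi)
    have := (ENNReal.toReal_lt_toReal (hfint i) (hb i)).2 hlt
    simp only [hδdef]
    linarith
  set r : ι → ℝ := fun i => δ i / (|S i| + 1) with hrdef
  have hrpos : ∀ i ∉ K, 0 < r i := by
    intro i hi
    apply div_pos (hδpos i hi)
    have := abs_nonneg (S i)
    linarith
  have hTne : (insert ε₁ ((Finset.univ.filter (fun i => i ∉ K)).image r)).Nonempty :=
    ⟨ε₁, Finset.mem_insert_self _ _⟩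
  set ε : ℝ := (insert ε₁ ((Finset.univ.filter (fun i => i ∉ K)).image r)).min' hTne
    with hεdef
  have hεmem : ε ∈ insert ε₁ ((Finset.univ.filter (fun i => i ∉ K)).image r) :=
    Finset.min'_mem _ _
  have hεpos : 0 < ε := by
    rcases Finset.mem_insert.1 hεmem with h | h
    · rw [h]; exact hε₁pos
    · obtain ⟨i, hi, hri⟩ := Finset.mem_image.1 h
      rw [Finset.mem_filter] at hi
      rw [← hri]
      exact hrpos i hi.2
  have hεε₁ : ε ≤ ε₁ := Finset.min'_le _ _ (Finset.mem_insert_self _ _)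
  have hεr : ∀ i ∉ K, ε ≤ r i := by
    intro i hi
    exact Finset.min'_le _ _ (Finset.mem_insert_of_mem (Finset.mem_image.2
      ⟨i, Finset.mem_filter.2 ⟨Finset.mem_univ _, hi⟩, rfl⟩))
  set u : Fin (K.card + 2) → ℝ := fun j => ε * c j with hudef
  have hu : ∀ j, |u j| ≤ 1 / 2 := by
    intro j
    rw [hudef]
    simp only []
    rw [abs_mul, abs_of_pos hεpos]
    calc ε * |c j| ≤ ε₁ * M :=
          mul_le_mul hεε₁ (hMle j) (abs_nonneg _) (le_of_lt hε₁pos)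
      _ ≤ 1 / 2 := by
          rw [hε₁def, div_mul_eq_mul_div, one_mul, div_le_div_iff₀ (by linarith) (by norm_num)]
          linarith
  have h1p : ∀ j, (0:ℝ) ≤ 1 + u j := by
    intro j; have := abs_le.1 (hu j); linarith [this.1]
  have h1m : ∀ j, (0:ℝ) ≤ 1 - u j := by
    intro j; have := abs_le.1 (hu j); linarith [(abs_le.1 (hu j)).2]
  -- the perturbed measures
  set π' : Measure X :=
    (∑ j, ENNReal.ofReal (1 + u j) • π.restrict (A j)) + π.restrict (⋃ j, A j)ᶜ with hπ'def
  set π'' : Measure X :=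
    (∑ j, ENNReal.ofReal (1 - u j) • π.restrict (A j)) + π.restrict (⋃ j, A j)ᶜ with hπ''def
  have hlint : ∀ (w : Fin (K.card + 2) → ℝ) (g : X → ℝ≥0∞),
      ∫⁻ x, g x ∂((∑ j, ENNReal.ofReal (w j) • π.restrict (A j)) + π.restrict (⋃ j, A j)ᶜ)
        = (∑ j, ENNReal.ofReal (w j) * ∫⁻ x in A j, g x ∂π) + ∫⁻ x in (⋃ j, A j)ᶜ, g x ∂π := by
    intro w g
    rw [lintegral_add_measure, lintegral_finset_sum_measure]
    simp [lintegral_smul_measure]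
  have happ : ∀ (w : Fin (K.card + 2) → ℝ) (s : Set X), MeasurableSet s →
      ((∑ j, ENNReal.ofReal (w j) • π.restrict (A j)) + π.restrict (⋃ j, A j)ᶜ) s
        = (∑ j, ENNReal.ofReal (w j) * π (s ∩ A j)) + π (s ∩ (⋃ j, A j)ᶜ) := by
    intro w s hs
    rw [Measure.add_apply, Measure.coe_finset_sum, Finset.sum_apply,
      Measure.restrict_apply hs]
    congr 1
    refine Finset.sum_congr rfl (fun j _ => ?_)
    rw [Measure.smul_apply, Measure.restrict_apply hs, smul_eq_mul]
  have hsumfin : ∀ (w : Fin (K.card + 2) → ℝ) i,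
      (∑ j, ENNReal.ofReal (w j) * I i j) ≠ ∞ := by
    intro w i
    refine (ENNReal.sum_lt_top.2 (fun j _ => ?_)).ne
    exact ENNReal.mul_lt_top ENNReal.ofReal_lt_top (hIfin i j).lt_top
  have hvalfin : ∀ (w : Fin (K.card + 2) → ℝ) i,
      (∑ j, ENNReal.ofReal (w j) * I i j) + Ri i ≠ ∞ :=
    fun w i => ENNReal.add_ne_top.2 ⟨hsumfin w i, hRifin i⟩
  have htoReal : ∀ (w : Fin (K.card + 2) → ℝ), (∀ j, 0 ≤ w j) → ∀ i,
      ((∑ j, ENNReal.ofReal (w j) * I i j) + Ri i).toReal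
        = (∑ j, w j * (I i j).toReal) + (Ri i).toReal := by
    intro w hw i
    rw [ENNReal.toReal_add (hsumfin w i) (hRifin i),
      ENNReal.toReal_sum (fun j _ => ENNReal.mul_ne_top ENNReal.ofReal_ne_top (hIfin i j))]
    congr 1
    exact Finset.sum_congr rfl fun j _ => by
      rw [ENNReal.toReal_mul, ENNReal.toReal_ofReal (hw j)]
  have htotR : ∀ i, (∫⁻ x, f i x ∂π).toReal = (∑ j, (I i j).toReal) + (Ri i).toReal := by
    intro i
    have h1 : (∑ j, I i j) ≠ ∞ := (ENNReal.sum_lt_top.2 (fun j _ => (hIfin i j).lt_top)).ne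
    rw [hdecomp i, ENNReal.toReal_add h1 (hRifin i),
      ENNReal.toReal_sum (fun j _ => hIfin i j)]
  -- key constraint bound for perturbed measures
  have key : ∀ (σ : ℝ), |σ| = 1 → ∀ (w : Fin (K.card + 2) → ℝ),
      (∀ j, w j = 1 + σ * u j) → ∀ i,
      ∫⁻ x, f i x ∂((∑ j, ENNReal.ofReal (w j) • π.restrict (A j))
        + π.restrict (⋃ j, A j)ᶜ) ≤ b i := by
    intro σ hσ w hwu i
    have hσ1 : σ = 1 ∨ σ = -1 := abs_eq (by norm_num : (0:ℝ) ≤ 1) |>.1 hσ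
    have hσu : ∀ j, |σ * u j| ≤ 1 / 2 := fun j => by
      rw [abs_mul, hσ, one_mul]; exact hu j
    have hw : ∀ j, 0 ≤ w j := fun j => by
      rw [hwu j]; linarith [(abs_le.1 (hσu j)).1]
    rw [hlint w (f i), ← ENNReal.toReal_le_toReal (hvalfin w i) (hb i), htoReal w hw i]
    have hexp : ∑ j, w j * (I i j).toReal = (∑ j, (I i j).toReal) + σ * ε * S i := by
      rw [hSdef]
      simp only
      rw [Finset.mul_sum, ← Finset.sum_add_distrib]
      refine Finset.sum_congr rfl fun j _ => ?_
      rw [hwu j, hudef]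
      ring
    rw [hexp]
    have hfb : (∫⁻ x, f i x ∂π).toReal ≤ (b i).toReal :=
      (ENNReal.toReal_le_toReal (hfint i) (hb i)).2 (hle i)
    by_cases hiK : i ∈ K
    · have h0 : S i = 0 := hker1 ⟨i, hiK⟩
      rw [h0]
      have := htotR i
      linarith
    · have h1 : ε ≤ r i := hεr i hiK
      have h2 : 0 < δ i := hδpos i hiK
      have hδeq : δ i = (b i).toReal - (∫⁻ x, f i x ∂π).toReal := by rw [hδdef]
      have hrS : r i * (|S i| + 1) = δ i := by
        rw [hrdef]
        field_simp
      have hσS : σ * S i ≤ |S i| := by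
        rcases hσ1 with h | h <;> rw [h]
        · simpa using le_abs_self (S i)
        · simpa using neg_le_abs (S i)
      have h3 : σ * ε * S i ≤ δ i := by
        have h4 : σ * ε * S i = ε * (σ * S i) := by ring
        rw [h4]
        calc ε * (σ * S i) ≤ ε * |S i| :=
              mul_le_mul_of_nonneg_left hσS (le_of_lt hεpos)
          _ ≤ r i * |S i| := mul_le_mul_of_nonneg_right h1 (abs_nonneg _)
          _ ≤ r i * (|S i| + 1) :=
              mul_le_mul_of_nonneg_left (by linarith) (le_of_lt (hrpos i hiK))
          _ = δ i := hrS
      have := htotR i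
      linarith
  -- probability of perturbed measures
  have hPsumfin : ∀ (w : Fin (K.card + 2) → ℝ),
      (∑ j, ENNReal.ofReal (w j) * P j) ≠ ∞ := by
    intro w
    refine (ENNReal.sum_lt_top.2 (fun j _ => ?_)).ne
    exact ENNReal.mul_lt_top ENNReal.ofReal_lt_top (hPfin j).lt_top
  have hprob : ∀ (σ : ℝ), |σ| = 1 → ∀ (w : Fin (K.card + 2) → ℝ),
      (∀ j, w j = 1 + σ * u j) →
      IsProbabilityMeasure ((∑ j, ENNReal.ofReal (w j) • π.restrict (A j))
        + π.restrict (⋃ j, A j)ᶜ) := by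
    intro σ hσ w hwu
    have hσu : ∀ j, |σ * u j| ≤ 1 / 2 := fun j => by
      rw [abs_mul, hσ, one_mul]; exact hu j
    have hw : ∀ j, 0 ≤ w j := fun j => by
      rw [hwu j]; linarith [(abs_le.1 (hσu j)).1]
    constructor
    rw [happ w Set.univ MeasurableSet.univ]
    simp only [Set.univ_inter]
    have hfin : (∑ j, ENNReal.ofReal (w j) * π (A j)) + π (⋃ j, A j)ᶜ ≠ ∞ :=
      ENNReal.add_ne_top.2 ⟨hPsumfin w, measure_ne_top π _⟩
    rw [← ENNReal.toReal_eq_toReal_iff' hfin ENNReal.one_ne_top, ENNReal.toReal_one,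
      ENNReal.toReal_add (hPsumfin w) (measure_ne_top π _),
      ENNReal.toReal_sum (fun j _ => ENNReal.mul_ne_top ENNReal.ofReal_ne_top (hPfin j))]
    have hPtot : (∑ j, (P j).toReal) + (π (⋃ j, A j)ᶜ).toReal = 1 := by
      have h1 : ((∑ j, P j) + π (⋃ j, A j)ᶜ).toReal = (1 : ℝ≥0∞).toReal := by
        rw [hPdecomp]
      rw [ENNReal.toReal_add ((ENNReal.sum_lt_top.2
        (fun j _ => (hPfin j).lt_top)).ne) (measure_ne_top π _),
        ENNReal.toReal_sum (fun j _ => hPfin j), ENNReal.toReal_one] at h1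
      exact h1
    have hexp : ∑ j, (ENNReal.ofReal (w j) * π (A j)).toReal
        = (∑ j, (P j).toReal) + σ * ε * ∑ j, c j * (P j).toReal := by
      rw [Finset.mul_sum, ← Finset.sum_add_distrib]
      refine Finset.sum_congr rfl fun j _ => ?_
      rw [ENNReal.toReal_mul, ENNReal.toReal_ofReal (hw j), hwu j, hudef]
      show (1 + σ * (ε * c j)) * (P j).toReal = (P j).toReal + σ * ε * (c j * (P j).toReal)
      ring
    rw [hexp, hker2]
    linarith [hPtot]
  -- assembling the convex decomposition
  have hhalf2 : (ENNReal.ofReal (1/2)) * ENNReal.ofReal 2 = 1 := by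
    rw [← ENNReal.ofReal_mul (by norm_num)]
    norm_num
  have hcoef : ∀ j, ENNReal.ofReal (1 + u j) + ENNReal.ofReal (1 - u j)
      = ENNReal.ofReal 2 := by
    intro j
    rw [← ENNReal.ofReal_add (h1p j) (h1m j)]
    congr 1
    ring
  have hdec2 : π = ENNReal.ofReal (1/2) • π' + ENNReal.ofReal (1 - 1/2) • π'' := by
    have h12 : ENNReal.ofReal (1 - 1/2 : ℝ) = ENNReal.ofReal (1/2) := by norm_num
    rw [h12]
    ext s hs
    have hπs : π s = (∑ j, π (s ∩ A j)) + π (s ∩ (⋃ j, A j)ᶜ) := by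
      conv_lhs => rw [hμdecomp]
      rw [Measure.add_apply, Measure.coe_finset_sum, Finset.sum_apply,
        Measure.restrict_apply hs]
      congr 1
      exact Finset.sum_congr rfl fun j _ => Measure.restrict_apply hs
    rw [Measure.add_apply, Measure.smul_apply, Measure.smul_apply, smul_eq_mul,
      smul_eq_mul, hπ'def, hπ''def, happ _ s hs, happ _ s hs, ← mul_add, hπs]
    have hcomb : (∑ j, ENNReal.ofReal (1 + u j) * π (s ∩ A j)) + π (s ∩ (⋃ j, A j)ᶜ)
        + ((∑ j, ENNReal.ofReal (1 - u j) * π (s ∩ A j)) + π (s ∩ (⋃ j, A j)ᶜ))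
        = ENNReal.ofReal 2 * ((∑ j, π (s ∩ A j)) + π (s ∩ (⋃ j, A j)ᶜ)) := by
      rw [add_add_add_comm, ← Finset.sum_add_distrib, mul_add, Finset.mul_sum]
      congr 1
      · exact Finset.sum_congr rfl fun j _ => by rw [← add_mul, hcoef j]
      · rw [ENNReal.ofReal_ofNat, two_mul]
    rw [hcomb, ← mul_assoc, hhalf2, one_mul]
  -- applying extremality
  have hP' : IsProbabilityMeasure π' := hprob 1 (by norm_num) _ (fun j => by ring)
  have hP'' : IsProbabilityMeasure π'' := hprob (-1) (by norm_num) _ (fun j => by ring)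
  have hcon1 : ∀ i, ∫⁻ x, f i x ∂π' ≤ b i := by
    intro i
    rw [hπ'def]
    exact key 1 (by norm_num) _ (fun j => by ring) i
  have hcon2 : ∀ i, ∫⁻ x, f i x ∂π'' ≤ b i := by
    intro i
    rw [hπ''def]
    exact key (-1) (by norm_num) _ (fun j => by ring) i
  have heq : π' = π'' := hext π' π'' hP' hP'' hcon1 hcon2 hdec2
  -- contradiction at j₀
  have hempty : π (A j₀ ∩ (⋃ j, A j)ᶜ) = 0 := by
    rw [← Set.diff_eq, Set.diff_eq_empty.2 (Set.subset_iUnion A j₀)]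
    exact measure_empty
  have heval : ∀ (w : Fin (K.card + 2) → ℝ),
      ((∑ j, ENNReal.ofReal (w j) • π.restrict (A j)) + π.restrict (⋃ j, A j)ᶜ) (A j₀)
        = ENNReal.ofReal (w j₀) * P j₀ := by
    intro w
    rw [happ w _ (hA j₀), hempty, add_zero, Finset.sum_eq_single j₀]
    · rw [Set.inter_self]
    · intro j _ hjne
      rw [((hdis hjne).symm).inter_eq, measure_empty, mul_zero]
    · exact fun h => absurd (Finset.mem_univ j₀) h
  have h1 : π' (A j₀) = ENNReal.ofReal (1 + u j₀) * P j₀ := by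
    rw [hπ'def]; exact heval _
  have h2 : π'' (A j₀) = ENNReal.ofReal (1 - u j₀) * P j₀ := by
    rw [hπ''def]; exact heval _
  have hkey : ENNReal.ofReal (1 + u j₀) * P j₀ = ENNReal.ofReal (1 - u j₀) * P j₀ := by
    rw [← h1, ← h2, heq]
  have hReal := congrArg ENNReal.toReal hkey
  rw [ENNReal.toReal_mul, ENNReal.toReal_mul, ENNReal.toReal_ofReal (h1p j₀),
    ENNReal.toReal_ofReal (h1m j₀)] at hReal
  have hP0 : 0 < (P j₀).toReal := ENNReal.toReal_pos (hpos j₀) (hPfin j₀)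
  have hu0 : u j₀ = 0 := by nlinarith
  have : ε * c j₀ = 0 := hu0
  rcases mul_eq_zero.1 this with h | h
  · exact absurd h hεpos.ne'
  · exact hj₀ h

end AuxiliaryLemmas

open scoped Classical in
/-- every extreme point of the set `𝓕` of probability measures whose
marginals satisfy the one-state constraints has finite support of size at most
`n(π)+1`, where `n(π)` counts active constraints; in particular at most
`n·(|Ω|−1)+1` points. -/
theorem extreme_point_finite_support
    {Ω : Type} [Fintype Ω] [MeasurableSpace Ω] [MeasurableSingletonClass Ω]
    (hΩ : 2 ≤ Fintype.card Ω)
    (p : Ω → ℝ) (hp : ∀ ω, 0 < p ω) (hpsum : ∑ ω : Ω, p ω = 1)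
    (n : ℕ) (hn : 1 ≤ n) (ω₀ : Ω)
    (F : Set (Measure (Fin n → Belief Ω)))
    (hF : F = { π | IsProbabilityMeasure π ∧
      ∀ (i : Fin n) (ω : Ω), ω ≠ ω₀ →
        ∫⁻ x : Belief Ω, ENNReal.ofReal (x.1 ω) / ENNReal.ofReal (x.1 ω₀)
            ∂(π.map (fun q : Fin n → Belief Ω => q i))
          ≤ ENNReal.ofReal (p ω / p ω₀) })
    (π : Measure (Fin n → Belief Ω)) (hπ : π ∈ F)
    -- `π` is an extreme point of `F`:
    (hext : ∀ π' ∈ F, ∀ π'' ∈ F, ∀ t : ℝ, 0 < t → t < 1 →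
      π = ENNReal.ofReal t • π' + ENNReal.ofReal (1 - t) • π'' → π' = π'') :
    ∃ s : Finset (Fin n → Belief Ω), π (↑s)ᶜ = 0 ∧
      s.card ≤
        (Finset.univ.filter (fun q : Fin n × Ω => q.2 ≠ ω₀ ∧
          ∫⁻ x : Belief Ω, ENNReal.ofReal (x.1 q.2) / ENNReal.ofReal (x.1 ω₀)
              ∂(π.map (fun f : Fin n → Belief Ω => f q.1))
            = ENNReal.ofReal (p q.2 / p ω₀))).card + 1 ∧
      s.card ≤ n * (Fintype.card Ω - 1) + 1 := by
  rw [hF] at hπ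
  obtain ⟨hprob, hcons⟩ := hπ
  haveI := hprob
  set X := Fin n → Belief Ω with hXdef
  -- the constraint functions
  set fc : (Fin n × Ω) → X → ℝ≥0∞ := fun q x =>
    if q.2 = ω₀ then 0
    else ENNReal.ofReal ((x q.1).1 q.2) / ENNReal.ofReal ((x q.1).1 ω₀) with hfcdef
  set b : Fin n × Ω → ℝ≥0∞ := fun q =>
    if q.2 = ω₀ then 1 else ENNReal.ofReal (p q.2 / p ω₀) with hbdef
  have hgmeas : ∀ ω : Ω, Measurable (fun x : Belief Ω =>
      ENNReal.ofReal (x.1 ω) / ENNReal.ofReal (x.1 ω₀)) := by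
    intro ω
    apply Measurable.div
    · exact ENNReal.measurable_ofReal.comp
        ((measurable_pi_apply ω).comp measurable_subtype_coe)
    · exact ENNReal.measurable_ofReal.comp
        ((measurable_pi_apply ω₀).comp measurable_subtype_coe)
  have hmap : ∀ (ρ : Measure X) (i : Fin n) (ω : Ω),
      ∫⁻ x : Belief Ω, ENNReal.ofReal (x.1 ω) / ENNReal.ofReal (x.1 ω₀)
          ∂(ρ.map (fun q : X => q i))
        = ∫⁻ q : X, ENNReal.ofReal ((q i).1 ω) / ENNReal.ofReal ((q i).1 ω₀) ∂ρ := by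
    intro ρ i ω
    rw [lintegral_map (hgmeas ω) (measurable_pi_apply i)]
  have hle : ∀ q : Fin n × Ω, ∫⁻ x, fc q x ∂π ≤ b q := by
    intro q
    rw [hfcdef, hbdef]
    by_cases hq : q.2 = ω₀
    · simp [hq]
    · simp only [if_neg hq]
      rw [← hmap π q.1 q.2]
      exact hcons q.1 q.2 hq
  have hbne : ∀ q : Fin n × Ω, b q ≠ ∞ := by
    intro q
    rw [hbdef]
    by_cases hq : q.2 = ω₀ <;> simp [hq]
  set K : Finset (Fin n × Ω) := Finset.univ.filter (fun q : Fin n × Ω => q.2 ≠ ω₀ ∧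
      ∫⁻ x : Belief Ω, ENNReal.ofReal (x.1 q.2) / ENNReal.ofReal (x.1 ω₀)
          ∂(π.map (fun f : X => f q.1))
        = ENNReal.ofReal (p q.2 / p ω₀)) with hKdef
  have hK : ∀ q ∉ K, ∫⁻ x, fc q x ∂π ≠ b q := by
    intro q hq
    rw [hKdef, Finset.mem_filter] at hq
    push_neg at hq
    rw [hfcdef, hbdef]
    by_cases h2 : q.2 = ω₀
    · simp [h2]
    · simp only [if_neg h2]
      rw [← hmap π q.1 q.2]
      exact hq (Finset.mem_univ q) h2
  have hextw : ∀ π' π'' : Measure X, IsProbabilityMeasure π' → IsProbabilityMeasure π'' →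
      (∀ q, ∫⁻ x, fc q x ∂π' ≤ b q) → (∀ q, ∫⁻ x, fc q x ∂π'' ≤ b q) →
      π = ENNReal.ofReal (1/2) • π' + ENNReal.ofReal (1 - 1/2) • π'' → π' = π'' := by
    intro π' π'' h1 h2 hc1 hc2 hdec
    have hmem : ∀ (ρ : Measure X), IsProbabilityMeasure ρ →
        (∀ q, ∫⁻ x, fc q x ∂ρ ≤ b q) → ρ ∈ F := by
      intro ρ hρ hc
      rw [hF]
      refine ⟨hρ, fun i ω hω => ?_⟩
      have := hc (i, ω)
      rw [hfcdef, hbdef] at this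
      simp only [if_neg hω] at this
      rw [hmap ρ i ω]
      exact this
    exact hext π' (hmem π' h1 hc1) π'' (hmem π'' h2 hc2) (1/2) (by norm_num)
      (by norm_num) hdec
  obtain ⟨s, hs0, hscard⟩ := finite_support π (K.card + 1)
    (fun A hAm hAd hApos =>
      winkler π fc b hbne hle K hK hextw A hAm hAd (fun j => (hApos j).ne'))
  refine ⟨s, hs0, hscard, ?_⟩
  have hKle : K.card ≤ n * (Fintype.card Ω - 1) := by
    have hsub : K ⊆ Finset.univ.filter (fun q : Fin n × Ω => q.2 ≠ ω₀) := by
      intro q hq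
      rw [hKdef, Finset.mem_filter] at hq
      exact Finset.mem_filter.2 ⟨Finset.mem_univ q, hq.2.1⟩
    have hcard : (Finset.univ.filter (fun q : Fin n × Ω => q.2 ≠ ω₀)).card
        = n * (Fintype.card Ω - 1) := by
      have heq : Finset.univ.filter (fun q : Fin n × Ω => q.2 ≠ ω₀)
          = Finset.univ ×ˢ (Finset.univ.erase ω₀) := by
        ext ⟨i, ω⟩
        simp [Finset.mem_product, Finset.mem_erase, and_comm]
      rw [heq, Finset.card_product, Finset.card_erase_of_mem (Finset.mem_univ _)]
      simp [Finset.card_univ]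
    calc K.card ≤ _ := Finset.card_le_card hsub
      _ = n * (Fintype.card Ω - 1) := hcard
  omega
end
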